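/- arXiv:math/0702361 — 6 statements merged into one kernel-verified Lean document; each statement's English description precedes it below -/
import Mathlib

section
/- Let H be a metric space with unique midpoints m satisfying the Busemann condition d(m(x,y), m(x,z)) ≤ d(y,z)/2. Then the midpoint map is 1-Lipschitz with respect to Hausdorff distance on unordered pairs: for points x₁, x₂, y₁, y₂, d(m(x₁,x₂), m(y₁,y₂)) ≤ max(max(min(d(x₁,y₁), d(x₁,y₂)), min(d(x₂,y₁), d(x₂,y₂))), max(min(d(y₁,x₁), d(y₁,x₂)), min(d(y₂,x₁), d(y₂,x₂)))) whenever this Hausdorff distance between {x₁,x₂} and {y₁,y₂} is at most min over distinct points of d(x_i,x_j)/2. -/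
theorem stmt_2 {H : Type*} [MetricSpace H]
    (m : H → H → H)
    (hmid : ∀ x y : H, dist x (m x y) = dist x y / 2 ∧ dist y (m x y) = dist x y / 2)
    (huniq : ∀ x y z : H, dist x z = dist x y / 2 → dist y z = dist x y / 2 → z = m x y)
    (hbus : ∀ x y z : H, dist (m x y) (m x z) ≤ dist y z / 2)
    (x₁ x₂ y₁ y₂ : H)
    (hHd : max (max (min (dist x₁ y₁) (dist x₁ y₂)) (min (dist x₂ y₁) (dist x₂ y₂)))
           (max (min (dist y₁ x₁) (dist y₁ x₂)) (min (dist y₂ x₁) (dist y₂ x₂)))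
        ≤ dist x₁ x₂ / 2) :
    dist (m x₁ x₂) (m y₁ y₂) ≤
      max (max (min (dist x₁ y₁) (dist x₁ y₂)) (min (dist x₂ y₁) (dist x₂ y₂)))
          (max (min (dist y₁ x₁) (dist y₁ x₂)) (min (dist y₂ x₁) (dist y₂ x₂))) := by
  have msymm : ∀ x y : H, m x y = m y x := fun x y =>
    (huniq x y (m y x) (by rw [(hmid y x).2, dist_comm x y])
      (by rw [(hmid y x).1, dist_comm x y])).symm
  have key : ∀ a b c d : H, dist (m a b) (m c d) ≤ (dist a c + dist b d) / 2 := by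
    intro a b c d
    calc dist (m a b) (m c d) ≤ dist (m a b) (m c b) + dist (m c b) (m c d) :=
          dist_triangle _ _ _
      _ ≤ dist a c / 2 + dist b d / 2 := by
          gcongr
          · rw [msymm a b, msymm c b]; exact hbus b a c
          · exact hbus c b d
      _ = (dist a c + dist b d) / 2 := by ring
  set D := max (max (min (dist x₁ y₁) (dist x₁ y₂)) (min (dist x₂ y₁) (dist x₂ y₂)))
          (max (min (dist y₁ x₁) (dist y₁ x₂)) (min (dist y₂ x₁) (dist y₂ x₂))) with hD
  have hr1 : min (dist x₁ y₁) (dist x₁ y₂) ≤ D :=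
    le_trans (le_max_left _ _) (le_max_left _ _)
  have hr2 : min (dist x₂ y₁) (dist x₂ y₂) ≤ D :=
    le_trans (le_max_right _ _) (le_max_left _ _)
  have hc1 : min (dist x₁ y₁) (dist x₂ y₁) ≤ D := by
    rw [dist_comm x₁ y₁, dist_comm x₂ y₁]
    exact le_trans (le_max_left _ _) (le_max_right _ _)
  have hc2 : min (dist x₁ y₂) (dist x₂ y₂) ≤ D := by
    rw [dist_comm x₁ y₂, dist_comm x₂ y₂]
    exact le_trans (le_max_right _ _) (le_max_right _ _)
  have claim : (dist x₁ y₁ ≤ D ∧ dist x₂ y₂ ≤ D) ∨ (dist x₁ y₂ ≤ D ∧ dist x₂ y₁ ≤ D) := by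
    rcases min_le_iff.mp hr1 with h | h <;> rcases min_le_iff.mp hr2 with h' | h' <;>
      rcases min_le_iff.mp hc1 with h'' | h'' <;> rcases min_le_iff.mp hc2 with h''' | h''' <;>
      tauto
  rcases claim with ⟨h, h'⟩ | ⟨h, h'⟩
  · have := key x₁ x₂ y₁ y₂
    linarith
  · have := key x₁ x₂ y₂ y₁
    rw [msymm y₂ y₁] at this
    linarith
end

section
/- In a CAT(0) space H, for any three points x₁, x₂, x₃ define the first-level points y₁ = m(x₂,x₃), y₂ = m(x₁,x₃), y₃ = m(x₁,x₂) (midpoints of the opposite pairs). Then for every point x in H, 2·(d(x,y₁)² + d(x,y₂)² + d(x,y₃)²) + (d(y₁,x₂)² + d(y₁,x₃)² + d(y₂,x₁)² + d(y₂,x₃)² + d(y₃,x₁)² + d(y₃,x₂)²) ≤ 2·(d(x,x₁)² + d(x,x₂)² + d(x,x₃)²). -/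
/-- In a CAT(0) space (encoded by geodesics `γ` with the comparison inequality),
with `y₁, y₂, y₃` the midpoints of the sides opposite to `x₁, x₂, x₃`,
the summed parallelogram-type inequality holds. -/
theorem stmt_4 {H : Type*} [MetricSpace H]
    (γ : H → H → ℝ → H)
    (hγ0 : ∀ x y : H, γ x y 0 = x) (hγ1 : ∀ x y : H, γ x y 1 = y)
    (hγd : ∀ x y : H, ∀ s ∈ Set.Icc (0 : ℝ) 1, ∀ t ∈ Set.Icc (0 : ℝ) 1,
      dist (γ x y s) (γ x y t) = |s - t| * dist x y)
    (hcat : ∀ x y z : H, ∀ t ∈ Set.Icc (0 : ℝ) 1,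
      dist x (γ y z t) ^ 2 ≤ (1 - t) * dist x y ^ 2 + t * dist x z ^ 2
        - t * (1 - t) * dist y z ^ 2)
    (x₁ x₂ x₃ : H)
    (y₁ y₂ y₃ : H)
    (hy₁ : y₁ = γ x₂ x₃ (1 / 2)) (hy₂ : y₂ = γ x₁ x₃ (1 / 2)) (hy₃ : y₃ = γ x₁ x₂ (1 / 2))
    (x : H) :
    2 * (dist x y₁ ^ 2 + dist x y₂ ^ 2 + dist x y₃ ^ 2)
      + (dist y₁ x₂ ^ 2 + dist y₁ x₃ ^ 2 + dist y₂ x₁ ^ 2 + dist y₂ x₃ ^ 2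
          + dist y₃ x₁ ^ 2 + dist y₃ x₂ ^ 2)
      ≤ 2 * (dist x x₁ ^ 2 + dist x x₂ ^ 2 + dist x x₃ ^ 2) := by
  have h0 : (0:ℝ) ∈ Set.Icc (0:ℝ) 1 := by norm_num
  have h1 : (1:ℝ) ∈ Set.Icc (0:ℝ) 1 := by norm_num
  have hh : (1/2:ℝ) ∈ Set.Icc (0:ℝ) 1 := by norm_num
  have e1 : dist y₁ x₂ = 1/2 * dist x₂ x₃ := by
    have h := hγd x₂ x₃ (1/2) hh 0 h0
    rw [hγ0] at h; rw [hy₁, h]; norm_num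
  have e2 : dist y₁ x₃ = 1/2 * dist x₂ x₃ := by
    have h := hγd x₂ x₃ (1/2) hh 1 h1
    rw [hγ1] at h; rw [hy₁, h]; norm_num
  have e3 : dist y₂ x₁ = 1/2 * dist x₁ x₃ := by
    have h := hγd x₁ x₃ (1/2) hh 0 h0
    rw [hγ0] at h; rw [hy₂, h]; norm_num
  have e4 : dist y₂ x₃ = 1/2 * dist x₁ x₃ := by
    have h := hγd x₁ x₃ (1/2) hh 1 h1
    rw [hγ1] at h; rw [hy₂, h]; norm_num
  have e5 : dist y₃ x₁ = 1/2 * dist x₁ x₂ := by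
    have h := hγd x₁ x₂ (1/2) hh 0 h0
    rw [hγ0] at h; rw [hy₃, h]; norm_num
  have e6 : dist y₃ x₂ = 1/2 * dist x₁ x₂ := by
    have h := hγd x₁ x₂ (1/2) hh 1 h1
    rw [hγ1] at h; rw [hy₃, h]; norm_num
  have c1 := hcat x x₂ x₃ (1/2) hh
  have c2 := hcat x x₁ x₃ (1/2) hh
  have c3 := hcat x x₁ x₂ (1/2) hh
  rw [← hy₁] at c1; rw [← hy₂] at c2; rw [← hy₃] at c3
  rw [e1, e2, e3, e4, e5, e6]
  nlinarith [c1, c2, c3]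
end

section
/- In ℝⁿ with the ℓ¹ norm, the Chebyshev radius of a two-point set {x, y} equals ‖x−y‖₁/2, and the set of Chebyshev centers is exactly the set of points t with Σⱼ |tⱼ − xⱼ| = Σⱼ |tⱼ − yⱼ| = ‖x−y‖₁/2 and min(xⱼ,yⱼ) ≤ tⱼ ≤ max(xⱼ,yⱼ) for all j. -/
lemma dist_l1 {n : ℕ} (a b : PiLp 1 (fun _ : Fin n => ℝ)) :
    dist a b = ∑ j, |a j - b j| := by
  rw [PiLp.dist_eq_sum (by norm_num : 0 < (1 : ENNReal).toReal)]
  simp [Real.dist_eq]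

lemma between_of_abs_add {a b c : ℝ} (h : |c - a| + |c - b| = |a - b|) :
    min a b ≤ c ∧ c ≤ max a b := by
  have h1 : a - c ≤ |c - a| := by rw [abs_sub_comm]; exact le_abs_self _
  have h2 : c - a ≤ |c - a| := le_abs_self _
  have h3 : b - c ≤ |c - b| := by rw [abs_sub_comm]; exact le_abs_self _
  have h4 : c - b ≤ |c - b| := le_abs_self _
  rcases le_total a b with hab | hab
  · rw [min_eq_left hab, max_eq_right hab]
    have e : |a - b| = b - a := by rw [abs_of_nonpos (by linarith)]; ring
    rw [e] at h
    constructor <;> linarith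
  · rw [min_eq_right hab, max_eq_left hab]
    have e : |a - b| = a - b := abs_of_nonneg (by linarith)
    rw [e] at h
    constructor <;> linarith

/-- In `ℝⁿ` with the `ℓ¹` norm, the Chebyshev radius of `{x, y}` is `‖x − y‖₁ / 2`,
and the Chebyshev centers are exactly the points `t` equidistant (at distance
`‖x − y‖₁ / 2`) from `x` and `y` with each coordinate between those of `x` and `y`. -/
theorem stmt_11 (n : ℕ) (x y : PiLp 1 (fun _ : Fin n => ℝ)) :
    (⨅ t : PiLp 1 (fun _ : Fin n => ℝ), max (dist t x) (dist t y)) = dist x y / 2 ∧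
    ∀ t : PiLp 1 (fun _ : Fin n => ℝ),
      max (dist t x) (dist t y) = dist x y / 2 ↔
        dist t x = dist x y / 2 ∧ dist t y = dist x y / 2 ∧
        ∀ j : Fin n, min (x j) (y j) ≤ t j ∧ t j ≤ max (x j) (y j) := by
  have tri : ∀ t : PiLp 1 (fun _ : Fin n => ℝ),
      dist x y ≤ dist t x + dist t y := fun t => by
    rw [dist_comm t x]; exact dist_triangle x t y
  have lb : ∀ t : PiLp 1 (fun _ : Fin n => ℝ),
      dist x y / 2 ≤ max (dist t x) (dist t y) := fun t => by
    have := tri t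
    have h1 := le_max_left (dist t x) (dist t y)
    have h2 := le_max_right (dist t x) (dist t y)
    linarith
  constructor
  · apply le_antisymm
    · have hmid : max (dist (midpoint ℝ x y) x) (dist (midpoint ℝ x y) y)
          = dist x y / 2 := by
        have h2 : ‖(2:ℝ)‖ = 2 := by norm_num
        rw [dist_midpoint_left, dist_midpoint_right, max_self, h2]
        ring
      calc (⨅ t : PiLp 1 (fun _ : Fin n => ℝ), max (dist t x) (dist t y))
          ≤ max (dist (midpoint ℝ x y) x) (dist (midpoint ℝ x y) y) :=
            ciInf_le ⟨dist x y / 2, fun _ ⟨t, ht⟩ => ht ▸ lb t⟩ _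
        _ = dist x y / 2 := hmid
    · exact le_ciInf lb
  · intro t
    constructor
    · intro h
      have htx : dist t x ≤ dist x y / 2 := h ▸ le_max_left _ _
      have hty : dist t y ≤ dist x y / 2 := h ▸ le_max_right _ _
      have := tri t
      have hx : dist t x = dist x y / 2 := by linarith
      have hy : dist t y = dist x y / 2 := by linarith
      refine ⟨hx, hy, ?_⟩
      have hsum : (∑ j, (|t j - x j| + |t j - y j|)) = ∑ j, |x j - y j| := by
        rw [Finset.sum_add_distrib, ← dist_l1, ← dist_l1, ← dist_l1, hx, hy]
        ring
      have hpt : ∀ j ∈ Finset.univ, |x j - y j| ≤ |t j - x j| + |t j - y j| := by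
        intro j _
        calc |x j - y j| = |(x j - t j) + (t j - y j)| := by ring_nf
          _ ≤ |x j - t j| + |t j - y j| := abs_add_le _ _
          _ = |t j - x j| + |t j - y j| := by rw [abs_sub_comm (x j)]
      have heq : ∀ j : Fin n, |t j - x j| + |t j - y j| = |x j - y j| := by
        by_contra hc
        push_neg at hc
        obtain ⟨j, hj⟩ := hc
        have hlt : |x j - y j| < |t j - x j| + |t j - y j| :=
          lt_of_le_of_ne (hpt j (Finset.mem_univ j)) (fun e => hj e.symm)
        have : (∑ j, |x j - y j|) < ∑ j, (|t j - x j| + |t j - y j|) :=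
          Finset.sum_lt_sum hpt ⟨j, Finset.mem_univ j, hlt⟩
        linarith [hsum]
      exact fun j => between_of_abs_add (heq j)
    · rintro ⟨hx, hy, -⟩
      rw [hx, hy, max_self]
end

section
/- In ℝⁿ with the ℓ¹ norm, for two-point sets the Chebyshev-center correspondence fails to be single-valued but satisfies a Lipschitz-type bound: if ‖x−x'‖₁ ≤ ε and ‖y−y'‖₁ ≤ ε, then the Hausdorff distance between the Chebyshev center sets cheb({x,y}) and cheb({x',y'}) is at most 4ε. -/
open Finset

lemma rebalance_nonneg {n : ℕ} (p c : Fin n → ℝ) (hc : ∀ i, 0 ≤ c i)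
    (hp : ∀ i, |p i| ≤ c i) (hs : 0 ≤ ∑ i, p i) :
    ∃ q : Fin n → ℝ, (∀ i, |q i| ≤ c i) ∧ ∑ i, q i = 0 ∧
      ∑ i, |q i - p i| ≤ |∑ i, p i| := by
  set s := ∑ i, p i with hsdef
  set d := ∑ i, c i with hddef
  have hd : 0 ≤ d := Finset.sum_nonneg fun i _ => hc i
  by_cases h0 : s + d = 0
  · have hs0 : s = 0 := le_antisymm (by linarith) hs
    refine ⟨p, hp, hs0, ?_⟩
    simp
  · have hpos : 0 < s + d := lt_of_le_of_ne (by linarith) (Ne.symm h0)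
    set lam := s / (s + d) with hlam
    have hlam0 : 0 ≤ lam := div_nonneg hs hpos.le
    have hlam1 : lam ≤ 1 := by rw [hlam, div_le_one hpos]; linarith
    refine ⟨fun i => p i - lam * (p i + c i), fun i => ?_, ?_, ?_⟩
    · have h1 : 0 ≤ p i + c i := by have := (abs_le.1 (hp i)).1; linarith
      have h2 := (abs_le.1 (hp i)).2
      simp only []
      rw [abs_le]
      constructor <;> nlinarith
    · have e : ∑ i, (p i - lam * (p i + c i)) = s - lam * (s + d) := by
        rw [Finset.sum_sub_distrib, ← Finset.mul_sum, Finset.sum_add_distrib]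
      rw [e, hlam, div_mul_cancel₀ _ h0]
      ring
    · have e : ∀ i, |(p i - lam * (p i + c i)) - p i| = lam * (p i + c i) := by
        intro i
        have h1 : 0 ≤ p i + c i := by have := (abs_le.1 (hp i)).1; linarith
        rw [show (p i - lam * (p i + c i)) - p i = -(lam * (p i + c i)) by ring,
          abs_neg, abs_of_nonneg (by positivity)]
      calc ∑ i, |(p i - lam * (p i + c i)) - p i| = ∑ i, lam * (p i + c i) := by
              exact Finset.sum_congr rfl fun i _ => e i
        _ = lam * (s + d) := by rw [← Finset.mul_sum, Finset.sum_add_distrib]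
        _ = s := by rw [hlam, div_mul_cancel₀ _ h0]
        _ ≤ |s| := le_abs_self s

lemma rebalance {n : ℕ} (p c : Fin n → ℝ) (hc : ∀ i, 0 ≤ c i)
    (hp : ∀ i, |p i| ≤ c i) :
    ∃ q : Fin n → ℝ, (∀ i, |q i| ≤ c i) ∧ ∑ i, q i = 0 ∧
      ∑ i, |q i - p i| ≤ |∑ i, p i| := by
  by_cases hs : 0 ≤ ∑ i, p i
  · exact rebalance_nonneg p c hc hp hs
  · obtain ⟨q, hq1, hq2, hq3⟩ := rebalance_nonneg (fun i => -(p i)) c hc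
      (fun i => by rw [abs_neg]; exact hp i)
      (by rw [Finset.sum_neg_distrib]; linarith)
    refine ⟨fun i => -(q i), fun i => by rw [abs_neg]; exact hq1 i, ?_, ?_⟩
    · simp only []
      rw [Finset.sum_neg_distrib]; linarith
    · calc ∑ i, |(-(q i)) - p i| = ∑ i, |q i - -(p i)| := by
            refine Finset.sum_congr rfl fun i _ => ?_
            rw [show (-(q i)) - p i = -(q i - -(p i)) by ring, abs_neg]
      _ ≤ |∑ i, -(p i)| := hq3
      _ = |∑ i, p i| := by rw [Finset.sum_neg_distrib, abs_neg]


lemma clamp_bound (a b q : ℝ) (hb : 0 ≤ b) (hq : |q| ≤ a) :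
    |max (-b) (min b q) - q| ≤ |a - b| := by
  have h1 := (abs_le.1 hq).1
  have h2 := (abs_le.1 hq).2
  have hab : a - b ≤ |a - b| := le_abs_self _
  rcases le_total b q with h | h
  · rw [min_eq_left h, max_eq_right (by linarith)]
    rw [abs_of_nonpos (by linarith)]
    linarith
  · rw [min_eq_right h]
    rcases le_total q (-b) with h' | h'
    · rw [max_eq_left h', abs_of_nonneg (by linarith)]
      linarith
    · rw [max_eq_right h']
      simp [abs_nonneg]

lemma key_id (h w : ℝ) (hw : |h| ≤ |w|) :
    |h + w| = (if 0 ≤ w then h else -h) + |w| ∧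
    |h - w| = |w| - (if 0 ≤ w then h else -h) := by
  split_ifs with hw0
  · have hw' : |w| = w := abs_of_nonneg hw0
    rw [hw'] at hw ⊢
    have h1 := (abs_le.1 hw).1
    have h2 := (abs_le.1 hw).2
    constructor
    · rw [abs_of_nonneg (by linarith)]
    · rw [abs_of_nonpos (by linarith)]; ring
  · push_neg at hw0
    have hw' : |w| = -w := abs_of_nonpos hw0.le
    rw [hw'] at hw ⊢
    have h1 := (abs_le.1 hw).1
    have h2 := (abs_le.1 hw).2
    constructor
    · rw [abs_of_nonpos (by linarith)]; ring
    · rw [abs_of_nonneg (by linarith)]; ring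

lemma move {n : ℕ} (x y x' y' t : Fin n → ℝ)
    (hx1 : ∑ i, |t i - x i| ≤ (∑ i, |x i - y i|) / 2)
    (hy1 : ∑ i, |t i - y i| ≤ (∑ i, |x i - y i|) / 2) :
    ∃ t' : Fin n → ℝ,
      (∑ i, |t' i - x' i| ≤ (∑ i, |x' i - y' i|) / 2) ∧
      (∑ i, |t' i - y' i| ≤ (∑ i, |x' i - y' i|) / 2) ∧
      ∑ i, |t i - t' i| ≤ 3/2 * ((∑ i, |x i - x' i|) + (∑ i, |y i - y' i|)) := by
  classical
  -- names for the midpoints and half-differences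
  set m : Fin n → ℝ := fun i => (x i + y i) / 2 with hmdef
  set m' : Fin n → ℝ := fun i => (x' i + y' i) / 2 with hm'def
  set w : Fin n → ℝ := fun i => (y i - x i) / 2 with hwdef
  set w' : Fin n → ℝ := fun i => (y' i - x' i) / 2 with hw'def
  set h : Fin n → ℝ := fun i => t i - m i with hhdef
  -- per-coordinate collinearity
  have hterm : ∀ i ∈ (univ : Finset (Fin n)),
      0 ≤ |t i - x i| + |t i - y i| - |x i - y i| := by
    intro i _
    have : |x i - y i| ≤ |t i - x i| + |t i - y i| := by
      calc |x i - y i| = |(-(t i - x i)) + (t i - y i)| := by ring_nf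
        _ ≤ |(-(t i - x i))| + |t i - y i| := abs_add_le _ _
        _ = |t i - x i| + |t i - y i| := by rw [abs_neg]
    linarith
  have hsle : ∑ i, (|t i - x i| + |t i - y i| - |x i - y i|) ≤ 0 := by
    rw [Finset.sum_sub_distrib, Finset.sum_add_distrib]
    linarith
  have hz := (Finset.sum_eq_zero_iff_of_nonneg hterm).1
    (le_antisymm hsle (Finset.sum_nonneg hterm))
  have hti : ∀ i, |t i - x i| + |t i - y i| = |x i - y i| := by
    intro i
    have := hz i (mem_univ i)
    linarith
  have hDsum : ∑ i, |t i - x i| + ∑ i, |t i - y i| = ∑ i, |x i - y i| := by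
    rw [← Finset.sum_add_distrib]
    exact Finset.sum_congr rfl fun i _ => hti i
  have hx2 : ∑ i, |t i - x i| = (∑ i, |x i - y i|) / 2 := by linarith
  have hwabs : ∀ i, |w i| = |x i - y i| / 2 := by
    intro i
    rw [hwdef]
    simp only []
    rw [abs_div, abs_two, abs_sub_comm]
  have hsumw : ∑ i, |w i| = (∑ i, |x i - y i|) / 2 := by
    rw [Finset.sum_div]
    exact Finset.sum_congr rfl fun i _ => hwabs i
  have hw'abs : ∀ i, |w' i| = |x' i - y' i| / 2 := by
    intro i
    rw [hw'def]
    simp only []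
    rw [abs_div, abs_two, abs_sub_comm]
  have hsumw' : ∑ i, |w' i| = (∑ i, |x' i - y' i|) / 2 := by
    rw [Finset.sum_div]
    exact Finset.sum_congr rfl fun i _ => hw'abs i
  -- basic identities
  have e1 : ∀ i, t i - x i = h i + w i := by
    intro i; rw [hhdef, hmdef, hwdef]; simp only []; ring
  have e2 : ∀ i, t i - y i = h i - w i := by
    intro i; rw [hhdef, hmdef, hwdef]; simp only []; ring
  have hhw : ∀ i, |h i| ≤ |w i| := by
    intro i
    have hi := hti i
    rw [e1 i, e2 i] at hi
    have habs : |h i + h i| ≤ |h i + w i| + |h i - w i| := by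
      calc |h i + h i| = |(h i + w i) + (h i - w i)| := by ring_nf
        _ ≤ _ := abs_add_le _ _
    have h2 : |h i + h i| = 2 * |h i| := by
      rw [← two_mul, abs_mul, abs_two]
    have h3 := hwabs i
    linarith
  set q : Fin n → ℝ := fun i => if 0 ≤ w i then h i else -h i with hqdef
  have hq : ∀ i, |q i| ≤ |w i| := by
    intro i
    rw [hqdef]
    simp only []
    split_ifs <;> simpa [abs_neg] using hhw i
  have hkey : ∀ i, |t i - x i| = q i + |w i| ∧ |t i - y i| = |w i| - q i := by
    intro i
    have hk := key_id (h i) (w i) (hhw i)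
    rw [e1 i, e2 i]
    constructor
    · rw [hk.1, hqdef]
    · rw [hk.2, hqdef]
  have hsq : ∑ i, q i = 0 := by
    have : ∑ i, |t i - x i| = ∑ i, (q i + |w i|) :=
      Finset.sum_congr rfl fun i _ => (hkey i).1
    rw [Finset.sum_add_distrib] at this
    rw [hx2] at this
    linarith [hsumw]
  -- clamp
  set c : Fin n → ℝ := fun i => |w' i| with hcdef
  set p : Fin n → ℝ := fun i => max (-(c i)) (min (c i) (q i)) with hpdef
  have hc : ∀ i, 0 ≤ c i := fun i => abs_nonneg _
  have hpc : ∀ i, |p i| ≤ c i := by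
    intro i
    rw [hpdef]
    simp only []
    rw [abs_le]
    refine ⟨le_max_left _ _, max_le (by linarith [hc i]) (min_le_left _ _)⟩
  have hpq : ∀ i, |p i - q i| ≤ |w i - w' i| := by
    intro i
    have := clamp_bound (|w i|) (c i) (q i) (hc i) (hq i)
    rw [hpdef]
    simp only []
    refine le_trans this (le_trans ?_ (abs_abs_sub_abs_le_abs_sub (w i) (w' i)))
    rw [hcdef]
  -- bounds in terms of the data
  have hwdiff : ∀ i, |w i - w' i| ≤ (|x i - x' i| + |y i - y' i|) / 2 := by
    intro i
    have e : w i - w' i = ((y i - y' i) - (x i - x' i)) / 2 := by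
      rw [hwdef, hw'def]; simp only []; ring
    rw [e, abs_div, abs_two]
    have h3 : |(y i - y' i) - (x i - x' i)| ≤ |y i - y' i| + |x i - x' i| := by
      calc |(y i - y' i) - (x i - x' i)| = |(y i - y' i) + (-(x i - x' i))| := by ring_nf
        _ ≤ |y i - y' i| + |(-(x i - x' i))| := abs_add_le _ _
        _ = _ := by rw [abs_neg]
    linarith
  have hmdiff : ∀ i, |m i - m' i| ≤ (|x i - x' i| + |y i - y' i|) / 2 := by
    intro i
    have e : m i - m' i = ((x i - x' i) + (y i - y' i)) / 2 := by
      rw [hmdef, hm'def]; simp only []; ring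
    rw [e, abs_div, abs_two]
    have h3 := abs_add_le (x i - x' i) (y i - y' i)
    linarith
  have hE : ∑ i, |w i - w' i| ≤ ((∑ i, |x i - x' i|) + (∑ i, |y i - y' i|)) / 2 := by
    calc ∑ i, |w i - w' i| ≤ ∑ i, (|x i - x' i| + |y i - y' i|) / 2 :=
          Finset.sum_le_sum fun i _ => hwdiff i
      _ = _ := by rw [← Finset.sum_div, Finset.sum_add_distrib]
  have hEm : ∑ i, |m i - m' i| ≤ ((∑ i, |x i - x' i|) + (∑ i, |y i - y' i|)) / 2 := by
    calc ∑ i, |m i - m' i| ≤ ∑ i, (|x i - x' i| + |y i - y' i|) / 2 :=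
          Finset.sum_le_sum fun i _ => hmdiff i
      _ = _ := by rw [← Finset.sum_div, Finset.sum_add_distrib]
  have hsp : |∑ i, p i| ≤ ∑ i, |w i - w' i| := by
    calc |∑ i, p i| = |∑ i, (p i - q i)| := by
          rw [Finset.sum_sub_distrib, hsq, sub_zero]
      _ ≤ ∑ i, |p i - q i| := Finset.abs_sum_le_sum_abs _ _
      _ ≤ ∑ i, |w i - w' i| := Finset.sum_le_sum fun i _ => hpq i
  -- rebalance
  obtain ⟨q', hq'1, hq'2, hq'3⟩ := rebalance p c hc hpc
  set h' : Fin n → ℝ := fun i => if 0 ≤ w' i then q' i else -q' i with hh'def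
  refine ⟨fun i => m' i + h' i, ?_, ?_, ?_⟩
  · -- distance to x'
    have hh'w' : ∀ i, |h' i| ≤ |w' i| := by
      intro i
      rw [hh'def]; simp only []
      split_ifs <;> simpa [abs_neg] using hq'1 i
    have hkey' : ∀ i, |(m' i + h' i) - x' i| = q' i + |w' i| := by
      intro i
      have e : (m' i + h' i) - x' i = h' i + w' i := by
        rw [hm'def, hw'def]; simp only []; ring
      have hk := key_id (h' i) (w' i) (hh'w' i)
      have hback : (if 0 ≤ w' i then h' i else -h' i) = q' i := by
        rw [hh'def]; simp only []
        split_ifs <;> simp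
      rw [e, hk.1, hback]
    calc ∑ i, |(m' i + h' i) - x' i| = ∑ i, (q' i + |w' i|) :=
          Finset.sum_congr rfl fun i _ => hkey' i
      _ = (∑ i, |x' i - y' i|) / 2 := by
          rw [Finset.sum_add_distrib, hq'2, hsumw', zero_add]
      _ ≤ _ := le_refl _
  · -- distance to y'
    have hh'w' : ∀ i, |h' i| ≤ |w' i| := by
      intro i
      rw [hh'def]; simp only []
      split_ifs <;> simpa [abs_neg] using hq'1 i
    have hkey' : ∀ i, |(m' i + h' i) - y' i| = |w' i| - q' i := by
      intro i
      have e : (m' i + h' i) - y' i = h' i - w' i := by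
        rw [hm'def, hw'def]; simp only []; ring
      have hk := key_id (h' i) (w' i) (hh'w' i)
      have hback : (if 0 ≤ w' i then h' i else -h' i) = q' i := by
        rw [hh'def]; simp only []
        split_ifs <;> simp
      rw [e, hk.2, hback]
    calc ∑ i, |(m' i + h' i) - y' i| = ∑ i, (|w' i| - q' i) :=
          Finset.sum_congr rfl fun i _ => hkey' i
      _ = (∑ i, |x' i - y' i|) / 2 := by
          rw [Finset.sum_sub_distrib, hq'2, hsumw', sub_zero]
      _ ≤ _ := le_refl _
  · -- distance from t
    have hhh' : ∀ i, |h i - h' i| ≤ |w i - w' i| + |q' i - p i| := by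
      intro i
      have hq'p := abs_nonneg (q' i - p i)
      have hqi : q i = if 0 ≤ w i then h i else -h i := by rw [hqdef]
      have hh'i : h' i = if 0 ≤ w' i then q' i else -q' i := by rw [hh'def]
      have hpqi := hpq i
      rw [abs_sub_comm] at hpqi
      have htri : |q i - q' i| ≤ |q i - p i| + |p i - q' i| := abs_sub_le _ _ _
      have hpq'i : |p i - q' i| = |q' i - p i| := abs_sub_comm _ _
      have hqw := hq i
      have hq'w' := hq'1 i
      rw [hcdef] at hq'w'
      split_ifs at hqi hh'i with hw1 hw2 hw2
      · -- both signs nonneg: h i = q i, h' i = q' i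
        rw [← hqi, hh'i]
        linarith
      · -- w i ≥ 0, w' i < 0
        push_neg at hw2
        have : |h i - h' i| ≤ |q i| + |q' i| := by
          rw [hh'i]
          calc |h i - -q' i| = |h i + q' i| := by rw [sub_neg_eq_add]
            _ ≤ |h i| + |q' i| := abs_add_le _ _
            _ = |q i| + |q' i| := by rw [hqi]
        have hww' : |w i - w' i| = |w i| + |w' i| := by
          rw [abs_of_nonneg (by linarith : (0:ℝ) ≤ w i - w' i),
            abs_of_nonneg hw1, abs_of_nonpos hw2.le]
          ring
        linarith
      · -- w i < 0, w' i ≥ 0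
        push_neg at hw1
        have : |h i - h' i| ≤ |q i| + |q' i| := by
          rw [hh'i]
          have : h i = -q i := by rw [hqi]; ring
          rw [this]
          calc |(-q i) - q' i| = |(-(q i + q' i))| := by ring_nf
            _ = |q i + q' i| := abs_neg _
            _ ≤ |q i| + |q' i| := abs_add_le _ _
        have hww' : |w i - w' i| = |w i| + |w' i| := by
          rw [abs_of_nonpos (by linarith : w i - w' i ≤ (0:ℝ)),
            abs_of_nonpos hw1.le, abs_of_nonneg hw2]
          ring
        linarith
      · -- both negative: h i = -q i, h' i = -q' i
        have hhi : h i = -q i := by rw [hqi]; ring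
        rw [hhi, hh'i]
        have : |(-q i) - (-q' i)| = |q i - q' i| := by
          rw [show (-q i) - (-q' i) = -(q i - q' i) by ring, abs_neg]
        rw [this]
        linarith
    calc ∑ i, |t i - (m' i + h' i)|
        ≤ ∑ i, (|m i - m' i| + (|w i - w' i| + |q' i - p i|)) := by
          refine Finset.sum_le_sum fun i _ => ?_
          have e : t i - (m' i + h' i) = (m i - m' i) + (h i - h' i) := by
            rw [hhdef]; simp only []; ring
          calc |t i - (m' i + h' i)| = |(m i - m' i) + (h i - h' i)| := by rw [e]
            _ ≤ |m i - m' i| + |h i - h' i| := abs_add_le _ _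
            _ ≤ _ := by linarith [hhh' i]
      _ = ∑ i, |m i - m' i| + (∑ i, |w i - w' i| + ∑ i, |q' i - p i|) := by
          rw [Finset.sum_add_distrib, Finset.sum_add_distrib]
      _ ≤ 3/2 * ((∑ i, |x i - x' i|) + (∑ i, |y i - y' i|)) := by
          have := le_trans hq'3 hsp
          linarith

lemma dist_pil1 {n : ℕ} (f g : PiLp 1 (fun _ : Fin n => ℝ)) :
    dist f g = ∑ i, |f i - g i| := by
  rw [PiLp.dist_eq_sum (by norm_num)]
  simp [Real.dist_eq, Real.rpow_one, ENNReal.toReal_one]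

/-- The set of Chebyshev centers of the two-point set `{x, y}` in `ℓ¹(ℝⁿ)`. -/
def chebSet {n : ℕ} (x y : PiLp 1 (fun _ : Fin n => ℝ)) : Set (PiLp 1 (fun _ : Fin n => ℝ)) :=
  {t | ∀ s : PiLp 1 (fun _ : Fin n => ℝ), max (dist t x) (dist t y) ≤ max (dist s x) (dist s y)}

lemma chebSet_iff {n : ℕ} (x y t : PiLp 1 (fun _ : Fin n => ℝ)) :
    t ∈ chebSet x y ↔ dist t x ≤ dist x y / 2 ∧ dist t y ≤ dist x y / 2 := by
  constructor
  · intro ht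
    set mp : PiLp 1 (fun _ : Fin n => ℝ) := WithLp.toLp 1 (fun i => (x i + y i) / 2) with hmp
    have hmx : dist mp x = dist x y / 2 := by
      rw [dist_pil1, dist_pil1, Finset.sum_div]
      refine Finset.sum_congr rfl fun i _ => ?_
      rw [hmp]
      simp only [PiLp.toLp_apply]
      rw [show (x i + y i) / 2 - x i = -(x i - y i) / 2 by ring, abs_div, abs_neg, abs_two]
    have hmy : dist mp y = dist x y / 2 := by
      rw [dist_pil1, dist_pil1, Finset.sum_div]
      refine Finset.sum_congr rfl fun i _ => ?_
      rw [hmp]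
      simp only [PiLp.toLp_apply]
      rw [show (x i + y i) / 2 - y i = (x i - y i) / 2 by ring, abs_div, abs_two]
    have h := ht mp
    rw [hmx, hmy, max_self] at h
    exact ⟨le_trans (le_max_left _ _) h, le_trans (le_max_right _ _) h⟩
  · rintro ⟨h1, h2⟩ s
    have htri : dist x y ≤ dist s x + dist s y := by
      have := dist_triangle x s y
      rw [dist_comm x s] at this
      linarith
    have hmax : dist x y / 2 ≤ max (dist s x) (dist s y) := by
      rcases le_total (dist s x) (dist s y) with h | h
      · rw [max_eq_right h]; linarith
      · rw [max_eq_left h]; linarith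
    exact max_le (le_trans h1 hmax) (le_trans h2 hmax)

/-- Lipschitz-type stability (with constant 4) of the Chebyshev-center sets of
two-point sets in `ℝⁿ` with the `ℓ¹` norm, in Hausdorff distance. -/
theorem stmt_12 (n : ℕ) (x y x' y' : PiLp 1 (fun _ : Fin n => ℝ)) (ε : ℝ) (hε : 0 ≤ ε)
    (hx : dist x x' ≤ ε) (hy : dist y y' ≤ ε) :
    Metric.hausdorffDist (chebSet x y) (chebSet x' y') ≤ 4 * ε := by
  have key : ∀ a b a' b' : PiLp 1 (fun _ : Fin n => ℝ), dist a a' ≤ ε → dist b b' ≤ ε →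
      ∀ u ∈ chebSet a b, ∃ v ∈ chebSet a' b', dist u v ≤ 4 * ε := by
    intro a b a' b' ha hb u hu
    rw [chebSet_iff, dist_pil1 u a, dist_pil1 u b, dist_pil1 a b] at hu
    obtain ⟨t', h1, h2, h3⟩ :=
      move (fun i => a i) (fun i => b i) (fun i => a' i) (fun i => b' i) (fun i => u i)
        hu.1 hu.2
    refine ⟨WithLp.toLp 1 t', ?_, ?_⟩
    · rw [chebSet_iff, dist_pil1, dist_pil1, dist_pil1]
      exact ⟨h1, h2⟩
    · rw [dist_pil1]
      rw [dist_pil1] at ha hb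
      calc ∑ i, |u i - t' i| ≤ 3/2 * ((∑ i, |a i - a' i|) + (∑ i, |b i - b' i|)) := h3
        _ ≤ 3/2 * (ε + ε) := by
            have h0 : (0:ℝ) < 3/2 := by norm_num
            apply mul_le_mul_of_nonneg_left _ h0.le
            exact add_le_add ha hb
        _ ≤ 4 * ε := by linarith
  apply Metric.hausdorffDist_le_of_mem_dist (by linarith)
  · exact key x y x' y' hx hy
  · intro u hu
    obtain ⟨v, hv1, hv2⟩ := key x' y' x y (by rw [dist_comm]; exact hx)
      (by rw [dist_comm]; exact hy) u hu
    exact ⟨v, hv1, hv2⟩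
end

section
/- Let H be a complete CAT(0) space. The Chebyshev center map is Hölder with exponent 1/2 in the following quantitative sense: if A and B are nonempty bounded subsets with Hausdorff distance Hd(A,B) = δ, cheb(A) = a, cheb(B) = b, and r denotes the Chebyshev radius of A, then d(a,b)² ≤ (r + δ)² − r² + ((r_B + δ)² − r_B²) ≤ 2δ(2r + 2δ), where r_B is the Chebyshev radius of B; in particular d(a,b) ≤ 2·√(δ·(r + δ) + δ·(r_B + δ)). -/
/-- Quantitative `1/2`-Hölder continuity of the Chebyshev center in a complete
CAT(0) space (encoded by geodesics `γ` with the comparison inequality). -/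
theorem stmt_14 {H : Type*} [MetricSpace H] [CompleteSpace H]
    (γ : H → H → ℝ → H)
    (hγ0 : ∀ x y : H, γ x y 0 = x) (hγ1 : ∀ x y : H, γ x y 1 = y)
    (hγd : ∀ x y : H, ∀ s ∈ Set.Icc (0 : ℝ) 1, ∀ t ∈ Set.Icc (0 : ℝ) 1,
      dist (γ x y s) (γ x y t) = |s - t| * dist x y)
    (hcat : ∀ x y z : H, ∀ t ∈ Set.Icc (0 : ℝ) 1,
      dist x (γ y z t) ^ 2 ≤ (1 - t) * dist x y ^ 2 + t * dist x z ^ 2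
        - t * (1 - t) * dist y z ^ 2)
    (A B : Set H) (hA : A.Nonempty) (hB : B.Nonempty)
    (hbA : Bornology.IsBounded A) (hbB : Bornology.IsBounded B)
    (a b : H)
    (ha : ∀ x : H, (⨆ p : A, dist a (p : H)) ≤ ⨆ p : A, dist x (p : H))
    (hb : ∀ x : H, (⨆ p : B, dist b (p : H)) ≤ ⨆ p : B, dist x (p : H))
    (rA rB δ : ℝ)
    (hrA : rA = ⨆ p : A, dist a (p : H)) (hrB : rB = ⨆ p : B, dist b (p : H))
    (hδ : δ = Metric.hausdorffDist A B) :
    dist a b ^ 2 ≤ (rA + δ) ^ 2 - rA ^ 2 + ((rB + δ) ^ 2 - rB ^ 2) ∧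
    (rA + δ) ^ 2 - rA ^ 2 + ((rB + δ) ^ 2 - rB ^ 2) ≤ 2 * δ * (2 * rA + 2 * δ) ∧
    dist a b ≤ 2 * Real.sqrt (δ * (rA + δ) + δ * (rB + δ)) := by
  have hAne : Nonempty A := hA.to_subtype
  have hBne : Nonempty B := hB.to_subtype
  have hδ0 : (0:ℝ) ≤ δ := hδ ▸ Metric.hausdorffDist_nonneg
  have hne : EMetric.hausdorffEdist A B ≠ ⊤ :=
    Metric.hausdorffEdist_ne_top_of_nonempty_of_bounded hA hB hbA hbB
  have bddA : ∀ x : H, BddAbove (Set.range fun p : A => dist x (p : H)) := by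
    intro x
    obtain ⟨r, hr⟩ := hbA.subset_closedBall x
    refine ⟨r, ?_⟩
    rintro _ ⟨p, rfl⟩
    simpa [Metric.mem_closedBall, dist_comm] using hr p.2
  have bddB : ∀ x : H, BddAbove (Set.range fun p : B => dist x (p : H)) := by
    intro x
    obtain ⟨r, hr⟩ := hbB.subset_closedBall x
    refine ⟨r, ?_⟩
    rintro _ ⟨p, rfl⟩
    simpa [Metric.mem_closedBall, dist_comm] using hr p.2
  -- each point of A is within rB + δ of b
  have hSAb : ∀ p : A, dist b (p : H) ≤ rB + δ := by
    intro p
    have h1 : Metric.infDist (p : H) B ≤ δ :=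
      hδ ▸ Metric.infDist_le_hausdorffDist_of_mem p.2 hne
    have key : ∀ ε > (0:ℝ), dist b (p : H) ≤ rB + δ + ε := by
      intro ε hε
      obtain ⟨q, hq, hqd⟩ :=
        (Metric.infDist_lt_iff hB).mp (lt_of_le_of_lt h1 (lt_add_of_pos_right δ hε))
      have h2 : dist b q ≤ rB := hrB ▸ le_ciSup (bddB b) (⟨q, hq⟩ : B)
      calc dist b (p : H) ≤ dist b q + dist q (p : H) := dist_triangle _ _ _
        _ ≤ rB + (δ + ε) := by
            rw [dist_comm q]
            linarith [hqd.le]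
        _ = rB + δ + ε := by ring
    linarith [le_of_forall_pos_le_add key]
  -- each point of B is within rA + δ of a
  have hneBA : EMetric.hausdorffEdist B A ≠ ⊤ := by
    rwa [show EMetric.hausdorffEdist B A = EMetric.hausdorffEdist A B from
      EMetric.hausdorffEdist_comm]
  have hSBa : ∀ p : B, dist a (p : H) ≤ rA + δ := by
    intro p
    have h1 : Metric.infDist (p : H) A ≤ δ := by
      rw [hδ, Metric.hausdorffDist_comm]
      exact Metric.infDist_le_hausdorffDist_of_mem p.2 hneBA
    have key : ∀ ε > (0:ℝ), dist a (p : H) ≤ rA + δ + ε := by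
      intro ε hε
      obtain ⟨q, hq, hqd⟩ :=
        (Metric.infDist_lt_iff hA).mp (lt_of_le_of_lt h1 (lt_add_of_pos_right δ hε))
      have h2 : dist a q ≤ rA := hrA ▸ le_ciSup (bddA a) (⟨q, hq⟩ : A)
      calc dist a (p : H) ≤ dist a q + dist q (p : H) := dist_triangle _ _ _
        _ ≤ rA + (δ + ε) := by
            rw [dist_comm q]
            linarith [hqd.le]
        _ = rA + δ + ε := by ring
    linarith [le_of_forall_pos_le_add key]
  -- nonnegativity of radii
  obtain ⟨p0, hp0⟩ := hA
  obtain ⟨q0, hq0⟩ := hB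
  have hrA0 : (0:ℝ) ≤ rA :=
    le_trans dist_nonneg (hrA ▸ le_ciSup (bddA a) (⟨p0, hp0⟩ : A))
  have hrB0 : (0:ℝ) ≤ rB :=
    le_trans dist_nonneg (hrB ▸ le_ciSup (bddB b) (⟨q0, hq0⟩ : B))
  -- midpoint
  set m := γ a b (1/2 : ℝ) with hm
  have hmem : (1/2 : ℝ) ∈ Set.Icc (0:ℝ) 1 := by constructor <;> norm_num
  have hcatm : ∀ p : H, dist p m ^ 2 ≤
      (1/2) * dist p a ^ 2 + (1/2) * dist p b ^ 2 - (1/4) * dist a b ^ 2 := by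
    intro p
    have := hcat p a b (1/2) hmem
    norm_num at this ⊢
    linarith
  -- A side
  have keyA : rA ^ 2 ≤ (1/2) * rA ^ 2 + (1/2) * (rB + δ) ^ 2 - (1/4) * dist a b ^ 2 := by
    have hRp : ∀ p : A, dist m (p : H) ^ 2 ≤
        (1/2) * rA ^ 2 + (1/2) * (rB + δ) ^ 2 - (1/4) * dist a b ^ 2 := by
      intro p
      have h1 : dist (p : H) a ≤ rA := by
        rw [dist_comm]
        exact hrA ▸ le_ciSup (bddA a) p
      have h2 : dist (p : H) b ≤ rB + δ := by
        rw [dist_comm]; exact hSAb p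
      have h3 := hcatm (p : H)
      have h1' : dist (p : H) a ^ 2 ≤ rA ^ 2 := pow_le_pow_left₀ dist_nonneg h1 2
      have h2' : dist (p : H) b ^ 2 ≤ (rB + δ) ^ 2 := pow_le_pow_left₀ dist_nonneg h2 2
      rw [dist_comm]
      linarith
    have hR0 : 0 ≤ (1/2) * rA ^ 2 + (1/2) * (rB + δ) ^ 2 - (1/4) * dist a b ^ 2 :=
      le_trans (sq_nonneg _) (hRp ⟨p0, hp0⟩)
    have hsup : (⨆ p : A, dist m (p : H)) ≤
        Real.sqrt ((1/2) * rA ^ 2 + (1/2) * (rB + δ) ^ 2 - (1/4) * dist a b ^ 2) := by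
      apply ciSup_le
      intro p
      rw [show dist m (p:H) = Real.sqrt (dist m (p:H) ^ 2) by
        rw [Real.sqrt_sq dist_nonneg]]
      exact Real.sqrt_le_sqrt (hRp p)
    have h4 : rA ≤
        Real.sqrt ((1/2) * rA ^ 2 + (1/2) * (rB + δ) ^ 2 - (1/4) * dist a b ^ 2) :=
      le_trans (hrA ▸ ha m) hsup
    calc rA ^ 2 ≤ Real.sqrt ((1/2) * rA ^ 2 + (1/2) * (rB + δ) ^ 2 - (1/4) * dist a b ^ 2) ^ 2 :=
          pow_le_pow_left₀ hrA0 h4 2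
      _ = _ := Real.sq_sqrt hR0
  -- B side
  have keyB : rB ^ 2 ≤ (1/2) * (rA + δ) ^ 2 + (1/2) * rB ^ 2 - (1/4) * dist a b ^ 2 := by
    have hRp : ∀ p : B, dist m (p : H) ^ 2 ≤
        (1/2) * (rA + δ) ^ 2 + (1/2) * rB ^ 2 - (1/4) * dist a b ^ 2 := by
      intro p
      have h1 : dist (p : H) a ≤ rA + δ := by
        rw [dist_comm]; exact hSBa p
      have h2 : dist (p : H) b ≤ rB := by
        rw [dist_comm]
        exact hrB ▸ le_ciSup (bddB b) p
      have h3 := hcatm (p : H)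
      have h1' : dist (p : H) a ^ 2 ≤ (rA + δ) ^ 2 := pow_le_pow_left₀ dist_nonneg h1 2
      have h2' : dist (p : H) b ^ 2 ≤ rB ^ 2 := pow_le_pow_left₀ dist_nonneg h2 2
      rw [dist_comm]
      linarith
    have hR0 : 0 ≤ (1/2) * (rA + δ) ^ 2 + (1/2) * rB ^ 2 - (1/4) * dist a b ^ 2 :=
      le_trans (sq_nonneg _) (hRp ⟨q0, hq0⟩)
    have hsup : (⨆ p : B, dist m (p : H)) ≤
        Real.sqrt ((1/2) * (rA + δ) ^ 2 + (1/2) * rB ^ 2 - (1/4) * dist a b ^ 2) := by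
      apply ciSup_le
      intro p
      rw [show dist m (p:H) = Real.sqrt (dist m (p:H) ^ 2) by
        rw [Real.sqrt_sq dist_nonneg]]
      exact Real.sqrt_le_sqrt (hRp p)
    have h4 : rB ≤
        Real.sqrt ((1/2) * (rA + δ) ^ 2 + (1/2) * rB ^ 2 - (1/4) * dist a b ^ 2) :=
      le_trans (hrB ▸ hb m) hsup
    calc rB ^ 2 ≤ Real.sqrt ((1/2) * (rA + δ) ^ 2 + (1/2) * rB ^ 2 - (1/4) * dist a b ^ 2) ^ 2 :=
          pow_le_pow_left₀ hrB0 h4 2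
      _ = _ := Real.sq_sqrt hR0
  -- first inequality
  have main : dist a b ^ 2 ≤ (rA + δ) ^ 2 - rA ^ 2 + ((rB + δ) ^ 2 - rB ^ 2) := by
    linarith [keyA, keyB]
  -- rB ≤ rA + δ
  have hrBle : rB ≤ rA + δ := by
    have h1 : rB ≤ ⨆ p : B, dist a (p : H) := hrB ▸ hb a
    have h2 : (⨆ p : B, dist a (p : H)) ≤ rA + δ := ciSup_le hSBa
    linarith
  have second : (rA + δ) ^ 2 - rA ^ 2 + ((rB + δ) ^ 2 - rB ^ 2) ≤ 2 * δ * (2 * rA + 2 * δ) := by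
    nlinarith [mul_nonneg hδ0 hδ0, mul_nonneg hδ0 (sub_nonneg.mpr hrBle)]
  refine ⟨main, second, ?_⟩
  -- third inequality
  set X := δ * (rA + δ) + δ * (rB + δ) with hX
  have hX0 : 0 ≤ X := by positivity
  have h4X : dist a b ^ 2 ≤ 4 * X := by nlinarith [main, mul_nonneg hδ0 hrA0, mul_nonneg hδ0 hrB0, mul_nonneg hδ0 hδ0]
  have h5 : dist a b ≤ Real.sqrt (4 * X) := by
    rw [show dist a b = Real.sqrt (dist a b ^ 2) by rw [Real.sqrt_sq dist_nonneg]]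
    exact Real.sqrt_le_sqrt h4X
  have h6 : Real.sqrt (4 * X) = 2 * Real.sqrt X := by
    rw [show (4:ℝ) * X = 2 ^ 2 * X by ring, Real.sqrt_mul (by positivity),
      Real.sqrt_sq (by norm_num)]
  linarith [h5, h6.le, h6.ge]
end

section
/- In the plane ℝ² with the ℓ^p norm for p > 2, the Chebyshev-center selection on 3-point sets is not Lipschitz: for every L > 0 there exist two 3-point sets σ, σ' with Hausdorff distance h > 0 such that ‖cheb(σ) − cheb(σ')‖_p > L·h; more concretely, since the modulus of convexity of the ℓ^p unit ball at (1,0) is of order ε^p, the map cheb restricted to perturbations of {(−1,0),(1,0)} is Hölder with exponent exactly 1/p and not Hölder with any exponent larger than 1/p. -/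
open scoped NNReal

private lemma myrr {x : ℝ} (hx : 0 ≤ x) {q : ℝ} (hq : q ≠ 0) : (x ^ q) ^ (1/q) = x := by
  rw [← Real.rpow_mul hx, mul_one_div_cancel hq, Real.rpow_one]

private lemma myri {x : ℝ} (hx : 0 ≤ x) {q : ℝ} (hq : q ≠ 0) : (x ^ (1/q)) ^ q = x := by
  rw [← Real.rpow_mul hx, one_div_mul_cancel hq, Real.rpow_one]

private lemma mysuper {x y q : ℝ} (hx : 0 ≤ x) (hy : 0 ≤ y) (hq : 1 ≤ q) :
    x ^ q + y ^ q ≤ (x + y) ^ q := by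
  have h := NNReal.add_rpow_le_rpow_add x.toNNReal y.toNNReal hq
  have h2 := NNReal.coe_le_coe.2 h
  rw [NNReal.coe_add, NNReal.coe_rpow, NNReal.coe_rpow, NNReal.coe_rpow, NNReal.coe_add,
    Real.coe_toNNReal x hx, Real.coe_toNNReal y hy] at h2
  exact h2

private lemma mydouble {x y q : ℝ} (hx : 0 ≤ x) (hy : 0 ≤ y) (hq : 1 ≤ q) :
    (x + y) ^ q ≤ 2 ^ (q - 1) * (x ^ q + y ^ q) := by
  have h := NNReal.rpow_add_le_mul_rpow_add_rpow x.toNNReal y.toNNReal hq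
  have h2 := NNReal.coe_le_coe.2 h
  push_cast at h2
  rwa [Real.coe_toNNReal x hx, Real.coe_toNNReal y hy] at h2

private lemma myclarkson_scalar {q : ℝ} (hq : 2 ≤ q) (a b : ℝ) :
    |a + b| ^ q + |a - b| ^ q ≤ 2 ^ (q - 1) * (|a| ^ q + |b| ^ q) := by
  have hq2 : (1:ℝ) ≤ q / 2 := by linarith
  have habs : ∀ c : ℝ, |c| ^ q = (c ^ 2) ^ (q / 2) := by
    intro c
    have : ((2:ℕ):ℝ) * (q/2) = q := by push_cast; ring
    rw [← sq_abs, ← Real.rpow_natCast_mul (abs_nonneg c) 2 (q/2), this]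
  rw [habs, habs, habs, habs]
  have step1 : ((a+b)^2) ^ (q/2) + ((a-b)^2) ^ (q/2) ≤ ((a+b)^2 + (a-b)^2) ^ (q/2) :=
    mysuper (sq_nonneg _) (sq_nonneg _) hq2
  have e1 : (a+b)^2 + (a-b)^2 = 2 * (a^2 + b^2) := by ring
  have step2 : (2 * (a^2 + b^2)) ^ (q/2) = 2 ^ (q/2) * (a^2 + b^2) ^ (q/2) :=
    Real.mul_rpow (by norm_num) (by positivity)
  have step3 : (a^2 + b^2) ^ (q/2) ≤ 2 ^ (q/2 - 1) * ((a^2) ^ (q/2) + (b^2) ^ (q/2)) :=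
    mydouble (sq_nonneg _) (sq_nonneg _) hq2
  have e2 : (2:ℝ) ^ (q/2) * 2 ^ (q/2 - 1) = 2 ^ (q - 1) := by
    rw [← Real.rpow_add (by norm_num : (0:ℝ) < 2)]; ring_nf
  calc ((a+b)^2) ^ (q/2) + ((a-b)^2) ^ (q/2)
      ≤ ((a+b)^2 + (a-b)^2) ^ (q/2) := step1
    _ = 2 ^ (q/2) * (a^2 + b^2) ^ (q/2) := by rw [e1, step2]
    _ ≤ 2 ^ (q/2) * (2 ^ (q/2 - 1) * ((a^2) ^ (q/2) + (b^2) ^ (q/2))) := by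
        apply mul_le_mul_of_nonneg_left step3 (by positivity)
    _ = 2 ^ (q - 1) * ((a^2) ^ (q/2) + (b^2) ^ (q/2)) := by rw [← e2]; ring

private lemma mybern {x h q : ℝ} (hx : 0 < x) (hh : 0 ≤ h) (hq : 1 ≤ q) :
    (x + h) ^ q - x ^ q ≤ q * h * (x + h) ^ (q - 1) := by
  have hxh : 0 < x + h := by linarith
  set t := h / (x + h) with ht
  have ht0 : 0 ≤ t := div_nonneg hh hxh.le
  have ht1 : t ≤ 1 := by rw [ht, div_le_one hxh]; linarith
  have hb := one_add_mul_self_le_rpow_one_add (s := -t) (by linarith) hq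
  have hth : (x + h) * t = h := by rw [ht]; field_simp
  have hxe : x = (x + h) * (1 - t) := by rw [mul_one_sub, hth]; ring
  have e : x ^ q = (x + h) ^ q * (1 - t) ^ q := by
    rw [hxe, Real.mul_rpow hxh.le (by linarith), ← hxe]
  have h1 : (x + h) ^ q * (1 - q * t) ≤ x ^ q := by
    rw [e]
    apply mul_le_mul_of_nonneg_left _ (Real.rpow_nonneg hxh.le q)
    have : (1:ℝ) + -t = 1 - t := by ring
    rw [this] at hb
    linarith [hb]
  have e2 : (x + h) ^ q * t = h * (x + h) ^ (q - 1) := by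
    rw [Real.rpow_sub hxh, Real.rpow_one, ht]
    ring
  calc (x + h) ^ q - x ^ q ≤ (x + h) ^ q - (x + h) ^ q * (1 - q * t) := by linarith
    _ = q * ((x + h) ^ q * t) := by ring
    _ = q * (h * (x + h) ^ (q - 1)) := by rw [e2]
    _ = q * h * (x + h) ^ (q - 1) := by ring


section Vec

variable {p : ℝ} [Fact (1 ≤ ENNReal.ofReal p)]

private lemma mynorm (hp : 0 < p) (u : PiLp (ENNReal.ofReal p) (fun _ : Fin 2 => ℝ)) :
    ‖u‖ = (|u 0| ^ p + |u 1| ^ p) ^ (1/p) := by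
  have hp' : 0 < (ENNReal.ofReal p).toReal := by
    rw [ENNReal.toReal_ofReal hp.le]; exact hp
  rw [PiLp.norm_eq_sum hp', ENNReal.toReal_ofReal hp.le, Fin.sum_univ_two,
    Real.norm_eq_abs, Real.norm_eq_abs]

private lemma mynorm_rpow (hp : 0 < p) (u : PiLp (ENNReal.ofReal p) (fun _ : Fin 2 => ℝ)) :
    ‖u‖ ^ p = |u 0| ^ p + |u 1| ^ p := by
  rw [mynorm hp u, myri (by positivity) hp.ne']

private lemma myclarkson (hp : 2 ≤ p) (u v : PiLp (ENNReal.ofReal p) (fun _ : Fin 2 => ℝ)) :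
    ‖u + v‖ ^ p + ‖u - v‖ ^ p ≤ 2 ^ (p - 1) * (‖u‖ ^ p + ‖v‖ ^ p) := by
  have hp0 : (0:ℝ) < p := by linarith
  rw [mynorm_rpow hp0, mynorm_rpow hp0, mynorm_rpow hp0, mynorm_rpow hp0]
  simp only [PiLp.add_apply, PiLp.sub_apply]
  have h0 := myclarkson_scalar hp (u 0) (v 0)
  have h1 := myclarkson_scalar hp (u 1) (v 1)
  nlinarith [h0, h1]

private lemma mykey (hp : 2 ≤ p) (c c' a : PiLp (ENNReal.ofReal p) (fun _ : Fin 2 => ℝ)) :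
    dist ((2:ℝ)⁻¹ • (c + c')) a ^ p + (dist c c' / 2) ^ p
      ≤ (dist c a ^ p + dist c' a ^ p) / 2 := by
  have hp0 : (0:ℝ) < p := by linarith
  have h := myclarkson hp (c - a) (c' - a)
  have e1 : (c - a) + (c' - a) = (2:ℝ) • ((2:ℝ)⁻¹ • (c + c') - a) := by
    rw [smul_sub, smul_inv_smul₀ (by norm_num : (2:ℝ) ≠ 0)]
    rw [two_smul]; abel
  have e2 : (c - a) - (c' - a) = c - c' := by abel
  rw [e1, e2, norm_smul] at h
  simp only [Real.norm_ofNat] at h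
  rw [Real.mul_rpow (by norm_num) (norm_nonneg _)] at h
  -- h : 2^p * ‖m - a‖^p + ‖c - c'‖^p ≤ 2^(p-1) * (‖c-a‖^p + ‖c'-a‖^p)
  have h2p : (0:ℝ) < 2 ^ p := Real.rpow_pos_of_pos (by norm_num) p
  have hpm : (2:ℝ) ^ (p - 1) * 2 = 2 ^ p := by
    rw [← Real.rpow_add_one (by norm_num : (2:ℝ) ≠ 0) (p-1)]
    norm_num
  simp only [dist_eq_norm]
  rw [Real.div_rpow (norm_nonneg _) (by norm_num : (0:ℝ) ≤ 2)]
  rw [← mul_le_mul_iff_of_pos_right h2p]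
  have expand : (‖(2:ℝ)⁻¹ • (c + c') - a‖ ^ p + ‖c - c'‖ ^ p / 2 ^ p) * 2 ^ p
      = 2 ^ p * ‖(2:ℝ)⁻¹ • (c + c') - a‖ ^ p + ‖c - c'‖ ^ p := by
    field_simp
  rw [expand]
  calc 2 ^ p * ‖(2:ℝ)⁻¹ • (c + c') - a‖ ^ p + ‖c - c'‖ ^ p
      ≤ 2 ^ (p-1) * (‖c - a‖ ^ p + ‖c' - a‖ ^ p) := h
    _ = (‖c - a‖ ^ p + ‖c' - a‖ ^ p) / 2 * 2 ^ p := by rw [← hpm]; ring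

end Vec

private lemma myrad_le {X : Type*} [PseudoMetricSpace X] {σ : Set X} (hne : σ.Nonempty)
    {c : X} {M : ℝ} (h : ∀ a ∈ σ, dist c a ≤ M) : (⨆ a : σ, dist c (a : X)) ≤ M := by
  haveI : Nonempty σ := hne.to_subtype
  exact ciSup_le fun a => h a a.2

private lemma myle_rad {X : Type*} [PseudoMetricSpace X] {σ : Set X} (hfin : σ.Finite)
    {c a : X} (ha : a ∈ σ) : dist c a ≤ ⨆ b : σ, dist c (b : X) := by
  haveI : Finite σ := hfin.to_subtype
  exact le_ciSup (f := fun b : σ => dist c (b : X)) (Set.finite_range _).bddAbove (⟨a, ha⟩ : σ)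

private lemma mytransfer {X : Type*} [PseudoMetricSpace X] {s t : Set X}
    (hs : s.Finite) (ht : t.Finite) (hsne : s.Nonempty) (htne : t.Nonempty) (c : X) :
    (⨆ a : s, dist c (a : X)) ≤ (⨆ a : t, dist c (a : X)) + Metric.hausdorffDist s t := by
  have hed : EMetric.hausdorffEdist s t ≠ ⊤ :=
    Metric.hausdorffEdist_ne_top_of_nonempty_of_bounded hsne htne hs.isBounded ht.isBounded
  refine le_of_forall_pos_le_add fun δ hδ => ?_
  refine myrad_le hsne fun a ha => ?_
  obtain ⟨b, hb, hab⟩ := Metric.exists_dist_lt_of_hausdorffDist_lt ha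
    (lt_add_of_pos_right _ hδ) hed
  calc dist c a ≤ dist c b + dist b a := dist_triangle _ _ _
    _ ≤ (⨆ a : t, dist c (a : X)) + (Metric.hausdorffDist s t + δ) := by
        apply add_le_add (myle_rad ht hb)
        rw [dist_comm]; exact hab.le
    _ = (⨆ a : t, dist c (a : X)) + Metric.hausdorffDist s t + δ := by ring
private def mypt (p : ℝ) (a b : ℝ) : PiLp (ENNReal.ofReal p) (fun _ : Fin 2 => ℝ) :=
  (WithLp.equiv (ENNReal.ofReal p) (Fin 2 → ℝ)).symm ![a, b]

private lemma mypt_apply0 (p a b : ℝ) : mypt p a b 0 = a := by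
  simp [mypt, WithLp.equiv_symm_apply, PiLp.toLp_apply]

private lemma mypt_apply1 (p a b : ℝ) : mypt p a b 1 = b := by
  simp [mypt, WithLp.equiv_symm_apply, PiLp.toLp_apply]

section Pts

variable {p : ℝ} [Fact (1 ≤ ENNReal.ofReal p)]

private lemma mydist (hp : 0 < p) (a b c d : ℝ) :
    dist (mypt p a b) (mypt p c d) = (|a - c| ^ p + |b - d| ^ p) ^ (1/p) := by
  rw [dist_eq_norm, mynorm hp]
  simp only [PiLp.sub_apply, mypt_apply0, mypt_apply1]

private lemma mymid (a b c d : ℝ) :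
    (2:ℝ)⁻¹ • (mypt p a b + mypt p c d) = mypt p ((a+c)/2) ((b+d)/2) := by
  ext i
  fin_cases i <;>
    simp [PiLp.smul_apply, PiLp.add_apply, mypt_apply0, mypt_apply1, smul_eq_mul] <;> ring

end Pts

private lemma mypair (p : ℝ) (hp : 2 < p) [Fact (1 ≤ ENNReal.ofReal p)]
    (cheb : Set (PiLp (ENNReal.ofReal p) (fun _ : Fin 2 => ℝ)) →
      PiLp (ENNReal.ofReal p) (fun _ : Fin 2 => ℝ))
    (hcheb : ∀ σ : Set (PiLp (ENNReal.ofReal p) (fun _ : Fin 2 => ℝ)), σ.Finite → σ.Nonempty →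
      ∀ x, (⨆ a : σ, dist (cheb σ) (a : PiLp (ENNReal.ofReal p) (fun _ : Fin 2 => ℝ)))
        ≤ ⨆ a : σ, dist x (a : PiLp (ENNReal.ofReal p) (fun _ : Fin 2 => ℝ)))
    (x₀ x₁ : PiLp (ENNReal.ofReal p) (fun _ : Fin 2 => ℝ))
    (hx₀ : x₀ = (WithLp.equiv (ENNReal.ofReal p) (Fin 2 → ℝ)).symm ![(-1 : ℝ), 0])
    (hx₁ : x₁ = (WithLp.equiv (ENNReal.ofReal p) (Fin 2 → ℝ)).symm ![(1 : ℝ), 0])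
    (ε : ℝ) (hε0 : 0 < ε) (hε2 : ε ≤ 1/2) :
    ∃ z z' : PiLp (ENNReal.ofReal p) (fun _ : Fin 2 => ℝ),
      dist z x₁ ≤ 2*ε ∧ dist z' x₁ ≤ ε ∧
      0 < Metric.hausdorffDist ({x₀, x₁, z} : Set _) ({x₀, x₁, z'} : Set _) ∧
      Metric.hausdorffDist ({x₀, x₁, z} : Set _) ({x₀, x₁, z'} : Set _) ≤ ε ^ p ∧
      dist (cheb {x₀, x₁, z}) (cheb {x₀, x₁, z'}) = ε / 2 := by
  have hp0 : (0:ℝ) < p := by linarith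
  have hp1 : (1:ℝ) ≤ p := by linarith
  have hp2 : (2:ℝ) ≤ p := by linarith
  have hpne : p ≠ 0 := hp0.ne'
  have hx₀' : x₀ = mypt p (-1) 0 := hx₀
  have hx₁' : x₁ = mypt p 1 0 := hx₁
  have hε1 : ε ≤ 1 := by linarith
  have hεp0 : 0 < ε ^ p := Real.rpow_pos_of_pos hε0 p
  have hεp_le : ε ^ p ≤ ε := by
    have := Real.rpow_le_rpow_of_exponent_ge hε0 hε1 hp1
    rwa [Real.rpow_one] at this
  have h1ε : 0 < 1 - ε ^ p := by linarith
  set g : ℝ := (1 - ε ^ p) ^ (1/p) with hgdef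
  have hg0 : 0 < g := Real.rpow_pos_of_pos h1ε _
  have hg1 : g < 1 := Real.rpow_lt_one h1ε.le (by linarith) (by positivity)
  have hgp : g ^ p = 1 - ε ^ p := myri h1ε.le hpne
  have hg_lb : 1 - ε ^ p ≤ g := by
    have := Real.rpow_le_rpow_of_exponent_ge h1ε (by linarith)
      (by rw [div_le_one hp0]; linarith : 1/p ≤ 1)
    rwa [Real.rpow_one] at this
  set z : PiLp (ENNReal.ofReal p) (fun _ : Fin 2 => ℝ) := mypt p g ε with hzdef
  set z' : PiLp (ENNReal.ofReal p) (fun _ : Fin 2 => ℝ) := mypt p 1 ε with hz'def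
  -- basic rpow values
  have habs0 : |(0:ℝ)| ^ p = 0 := by rw [abs_zero, Real.zero_rpow hpne]
  -- distances
  have dzx₁ : dist z x₁ = ((1-g) ^ p + ε ^ p) ^ (1/p) := by
    rw [hzdef, hx₁', mydist hp0]
    rw [abs_sub_comm, abs_of_nonneg (by linarith : (0:ℝ) ≤ 1 - g),
      show ε - 0 = ε by ring, abs_of_nonneg hε0.le]
  have dz'x₁ : dist z' x₁ = ε := by
    rw [hz'def, hx₁', mydist hp0]
    rw [sub_self, habs0, show ε - 0 = ε by ring, abs_of_nonneg hε0.le, zero_add]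
    exact myrr hε0.le hpne
  have hdzx₁ : dist z x₁ ≤ 2 * ε := by
    rw [dzx₁]
    have h1 : (1-g) ^ p ≤ ε ^ p :=
      Real.rpow_le_rpow (by linarith) (by linarith) hp0.le
    have h2 : ((1-g) ^ p + ε ^ p) ≤ (2*ε) ^ p := by
      have : ((2:ℝ)*ε) ^ p = 2 ^ p * ε ^ p := Real.mul_rpow (by norm_num) hε0.le
      have h2p : (2:ℝ) ≤ 2 ^ p := by
        have := Real.rpow_le_rpow_of_exponent_le (by norm_num : (1:ℝ) ≤ 2) hp1
        rwa [Real.rpow_one] at this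
      nlinarith [hεp0]
    calc ((1-g) ^ p + ε ^ p) ^ (1/p) ≤ ((2*ε) ^ p) ^ (1/p) :=
          Real.rpow_le_rpow (add_nonneg (Real.rpow_nonneg (by linarith) p) hεp0.le) h2
            (by positivity)
      _ = 2*ε := myrr (by linarith) hpne
  have h2p : (0:ℝ) < 2 ^ p := Real.rpow_pos_of_pos (by norm_num) p
  have hfinσ : ({x₀, x₁, z} : Set _).Finite :=
    Set.Finite.insert x₀ (Set.Finite.insert x₁ (Set.finite_singleton z))
  have hfinσ' : ({x₀, x₁, z'} : Set _).Finite :=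
    Set.Finite.insert x₀ (Set.Finite.insert x₁ (Set.finite_singleton z'))
  have hneσ : ({x₀, x₁, z} : Set _).Nonempty := ⟨x₀, Set.mem_insert _ _⟩
  have hneσ' : ({x₀, x₁, z'} : Set _).Nonempty := ⟨x₀, Set.mem_insert _ _⟩
  -- the Chebyshev center of the first set
  have hchebσ : cheb {x₀, x₁, z} = mypt p 0 0 := by
    have hub : (⨆ a : ({x₀, x₁, z} : Set _), dist (mypt p 0 0) (a : _)) ≤ 1 := by
      refine myrad_le hneσ ?_
      intro a ha
      simp only [Set.mem_insert_iff, Set.mem_singleton_iff] at ha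
      rcases ha with rfl | rfl | rfl
      · rw [hx₀', mydist hp0, show (0:ℝ) - (-1) = 1 by ring, sub_self, habs0, abs_one,
          Real.one_rpow, add_zero, Real.one_rpow]
      · rw [hx₁', mydist hp0, show (0:ℝ) - 1 = -1 by ring, sub_self, habs0, abs_neg, abs_one,
          Real.one_rpow, add_zero, Real.one_rpow]
      · rw [hzdef, mydist hp0, zero_sub, zero_sub, abs_neg, abs_neg,
          abs_of_nonneg hg0.le, abs_of_nonneg hε0.le, hgp, sub_add_cancel, Real.one_rpow]
    have hr_le : (⨆ a : ({x₀, x₁, z} : Set _), dist (cheb {x₀, x₁, z}) (a : _)) ≤ 1 :=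
      (hcheb _ hfinσ hneσ (mypt p 0 0)).trans hub
    have hmid : (2:ℝ)⁻¹ • (x₀ + x₁) = mypt p 0 0 := by
      rw [hx₀', hx₁', mymid]; norm_num
    have hd0 : dist x₀ x₁ = 2 := by
      rw [hx₀', hx₁', mydist hp0, sub_self, habs0, add_zero,
        show (-1:ℝ) - 1 = -2 by norm_num, abs_neg, show |(2:ℝ)| = 2 by norm_num]
      exact myrr (by norm_num) hpne
    have hkey := mykey hp2 x₀ x₁ (cheb {x₀, x₁, z})
    rw [hmid, hd0, show (2:ℝ)/2 = 1 by norm_num, Real.one_rpow] at hkey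
    have h1 : dist x₀ (cheb {x₀, x₁, z}) ^ p ≤ 1 := by
      rw [dist_comm]
      exact Real.rpow_le_one dist_nonneg
        (le_trans (myle_rad hfinσ (Set.mem_insert _ _)) hr_le) hp0.le
    have h2 : dist x₁ (cheb {x₀, x₁, z}) ^ p ≤ 1 := by
      rw [dist_comm]
      exact Real.rpow_le_one dist_nonneg
        (le_trans (myle_rad hfinσ (by simp)) hr_le) hp0.le
    have h3 : dist (mypt p 0 0) (cheb {x₀, x₁, z}) ^ p ≤ 0 := by linarith
    have h4 : dist (mypt p 0 0) (cheb {x₀, x₁, z}) = 0 := by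
      by_contra hne0
      have hlt : 0 < dist (mypt p 0 0) (cheb {x₀, x₁, z}) :=
        lt_of_le_of_ne dist_nonneg (Ne.symm hne0)
      exact absurd (Real.rpow_pos_of_pos hlt p) (by linarith)
    exact (dist_eq_zero.mp h4).symm
  -- the Chebyshev center of the second set
  have hchebσ' : cheb {x₀, x₁, z'} = mypt p 0 (ε/2) := by
    have hub : (⨆ a : ({x₀, x₁, z'} : Set _), dist (mypt p 0 (ε/2)) (a : _))
        ≤ (1 + (ε/2)^p) ^ (1/p) := by
      refine myrad_le hneσ' ?_
      intro a ha
      simp only [Set.mem_insert_iff, Set.mem_singleton_iff] at ha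
      rcases ha with rfl | rfl | rfl
      · rw [hx₀', mydist hp0, show (0:ℝ) - (-1) = 1 by ring, abs_one, Real.one_rpow,
          show ε/2 - 0 = ε/2 by ring, abs_of_nonneg (by positivity : (0:ℝ) ≤ ε/2)]
      · rw [hx₁', mydist hp0, show (0:ℝ) - 1 = -1 by ring, abs_neg, abs_one, Real.one_rpow,
          show ε/2 - 0 = ε/2 by ring, abs_of_nonneg (by positivity : (0:ℝ) ≤ ε/2)]
      · rw [hz'def, mydist hp0, show (0:ℝ) - 1 = -1 by ring, abs_neg, abs_one, Real.one_rpow,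
          show ε/2 - ε = -(ε/2) by ring, abs_neg, abs_of_nonneg (by positivity : (0:ℝ) ≤ ε/2)]
    have hr_le : (⨆ a : ({x₀, x₁, z'} : Set _), dist (cheb {x₀, x₁, z'}) (a : _))
        ≤ (1 + (ε/2)^p) ^ (1/p) :=
      (hcheb _ hfinσ' hneσ' (mypt p 0 (ε/2))).trans hub
    have hmid : (2:ℝ)⁻¹ • (x₀ + z') = mypt p 0 (ε/2) := by
      rw [hx₀', hz'def, mymid]; norm_num
    have hdxz' : dist x₀ z' = (2 ^ p + ε ^ p) ^ (1/p) := by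
      rw [hx₀', hz'def, mydist hp0, show (-1:ℝ) - 1 = -2 by norm_num, abs_neg,
        show |(2:ℝ)| = 2 by norm_num, zero_sub, abs_neg, abs_of_nonneg hε0.le]
    have hhalf : (dist x₀ z' / 2) ^ p = 1 + (ε/2)^p := by
      rw [hdxz', Real.div_rpow (Real.rpow_nonneg (by positivity) _) (by norm_num : (0:ℝ) ≤ 2),
        myri (by positivity) hpne, Real.div_rpow hε0.le (by norm_num : (0:ℝ) ≤ 2),
        add_div, div_self h2p.ne']
    have hkey := mykey hp2 x₀ z' (cheb {x₀, x₁, z'})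
    rw [hmid, hhalf] at hkey
    have hbound : ∀ a, a ∈ ({x₀, x₁, z'} : Set _) →
        dist a (cheb {x₀, x₁, z'}) ^ p ≤ 1 + (ε/2)^p := by
      intro a ha
      rw [dist_comm]
      calc dist (cheb {x₀, x₁, z'}) a ^ p
          ≤ ((1 + (ε/2)^p) ^ (1/p)) ^ p :=
            Real.rpow_le_rpow dist_nonneg (le_trans (myle_rad hfinσ' ha) hr_le) hp0.le
        _ = 1 + (ε/2)^p := myri (by positivity) hpne
    have h1 := hbound x₀ (Set.mem_insert _ _)
    have h2 := hbound z' (by simp)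
    have h3 : dist (mypt p 0 (ε/2)) (cheb {x₀, x₁, z'}) ^ p ≤ 0 := by linarith
    have h4 : dist (mypt p 0 (ε/2)) (cheb {x₀, x₁, z'}) = 0 := by
      by_contra hne0
      have hlt : 0 < dist (mypt p 0 (ε/2)) (cheb {x₀, x₁, z'}) :=
        lt_of_le_of_ne dist_nonneg (Ne.symm hne0)
      exact absurd (Real.rpow_pos_of_pos hlt p) (by linarith)
    exact (dist_eq_zero.mp h4).symm
  -- distance between the two centers
  have hcc : dist (cheb {x₀, x₁, z}) (cheb {x₀, x₁, z'}) = ε / 2 := by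
    rw [hchebσ, hchebσ', mydist hp0, sub_self, habs0, zero_add,
      show (0:ℝ) - ε/2 = -(ε/2) by ring, abs_neg, abs_of_nonneg (by positivity : (0:ℝ) ≤ ε/2)]
    exact myrr (by positivity) hpne
  -- Hausdorff distance bounds
  have hdzz' : dist z z' = 1 - g := by
    rw [hzdef, hz'def, mydist hp0, sub_self, habs0, add_zero, abs_sub_comm,
      abs_of_nonneg (by linarith : (0:ℝ) ≤ 1 - g)]
    exact myrr (by linarith) hpne
  have hH_le : Metric.hausdorffDist ({x₀, x₁, z} : Set _) ({x₀, x₁, z'} : Set _) ≤ ε ^ p := by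
    apply Metric.hausdorffDist_le_of_mem_dist hεp0.le
    · intro w hw
      simp only [Set.mem_insert_iff, Set.mem_singleton_iff] at hw
      rcases hw with rfl | rfl | rfl
      · exact ⟨w, Set.mem_insert _ _, by rw [dist_self]; exact hεp0.le⟩
      · exact ⟨w, by simp, by rw [dist_self]; exact hεp0.le⟩
      · exact ⟨z', by simp, by rw [hdzz']; linarith⟩
    · intro w hw
      simp only [Set.mem_insert_iff, Set.mem_singleton_iff] at hw
      rcases hw with rfl | rfl | rfl
      · exact ⟨w, Set.mem_insert _ _, by rw [dist_self]; exact hεp0.le⟩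
      · exact ⟨w, by simp, by rw [dist_self]; exact hεp0.le⟩
      · exact ⟨z, by simp, by rw [dist_comm, hdzz']; linarith⟩
  have hH_pos : 0 < Metric.hausdorffDist ({x₀, x₁, z} : Set _) ({x₀, x₁, z'} : Set _) := by
    rcases lt_or_eq_of_le
      (Metric.hausdorffDist_nonneg :
        0 ≤ Metric.hausdorffDist ({x₀, x₁, z} : Set _) ({x₀, x₁, z'} : Set _)) with h | h
    · exact h
    exfalso
    have hed : EMetric.hausdorffEdist ({x₀, x₁, z} : Set _) ({x₀, x₁, z'} : Set _) ≠ ⊤ :=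
      Metric.hausdorffEdist_ne_top_of_nonempty_of_bounded hneσ hneσ'
        hfinσ.isBounded hfinσ'.isBounded
    have hEq := (IsClosed.hausdorffDist_zero_iff_eq hfinσ.isClosed hfinσ'.isClosed hed).mp h.symm
    have hz'mem : z' ∈ ({x₀, x₁, z} : Set _) := by rw [hEq]; simp
    simp only [Set.mem_insert_iff, Set.mem_singleton_iff] at hz'mem
    rcases hz'mem with he | he | he
    · have h0' := congrArg (fun w : PiLp (ENNReal.ofReal p) (fun _ : Fin 2 => ℝ) => w 0) he
      simp only [hz'def, hx₀', mypt_apply0] at h0'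
      norm_num at h0'
    · have h0' := congrArg (fun w : PiLp (ENNReal.ofReal p) (fun _ : Fin 2 => ℝ) => w 1) he
      simp only [hz'def, hx₁', mypt_apply1] at h0'
      exact absurd h0' hε0.ne'
    · have h0' := congrArg (fun w : PiLp (ENNReal.ofReal p) (fun _ : Fin 2 => ℝ) => w 0) he
      simp only [hz'def, hzdef, mypt_apply0] at h0'
      rw [← h0'] at hg1
      exact absurd hg1 (lt_irrefl _)
  exact ⟨z, z', hdzx₁, le_of_eq dz'x₁, hH_pos, hH_le, hcc⟩
private lemma myd01 {p : ℝ} [Fact (1 ≤ ENNReal.ofReal p)] (hp0 : 0 < p) :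
    dist (mypt p (-1) 0) (mypt p 1 0) = 2 := by
  rw [mydist hp0, sub_self, abs_zero, Real.zero_rpow hp0.ne', add_zero,
    show (-1:ℝ) - 1 = -2 by norm_num, abs_neg, show |(2:ℝ)| = 2 by norm_num]
  exact myrr (by norm_num) hp0.ne'

private lemma mydw0 {p : ℝ} [Fact (1 ≤ ENNReal.ofReal p)] (hp0 : 0 < p) :
    dist (mypt p 0 0) (mypt p (-1) 0) = 1 := by
  rw [mydist hp0, sub_self, abs_zero, Real.zero_rpow hp0.ne', add_zero,
    show (0:ℝ) - (-1) = 1 by norm_num, abs_one, Real.one_rpow, Real.one_rpow]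

private lemma mydw1 {p : ℝ} [Fact (1 ≤ ENNReal.ofReal p)] (hp0 : 0 < p) :
    dist (mypt p 0 0) (mypt p 1 0) = 1 := by
  rw [mydist hp0, sub_self, abs_zero, Real.zero_rpow hp0.ne', add_zero,
    show (0:ℝ) - 1 = -1 by norm_num, abs_neg, abs_one, Real.one_rpow, Real.one_rpow]

/-- In the plane with the `ℓᵖ` norm, `p > 2`, the Chebyshev-center selection on
3-point sets is not Lipschitz; near the 2-net `{(-1,0), (1,0)}` it is Hölder with
exponent `1/p` and not Hölder with any larger exponent. Here `cheb` is any choice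
of Chebyshev center (unique by strict convexity) of finite nonempty sets. -/
theorem stmt_16 (p : ℝ) (hp : 2 < p) [Fact (1 ≤ ENNReal.ofReal p)]
    (cheb : Set (PiLp (ENNReal.ofReal p) (fun _ : Fin 2 => ℝ)) →
      PiLp (ENNReal.ofReal p) (fun _ : Fin 2 => ℝ))
    (hcheb : ∀ σ : Set (PiLp (ENNReal.ofReal p) (fun _ : Fin 2 => ℝ)), σ.Finite → σ.Nonempty →
      ∀ x, (⨆ a : σ, dist (cheb σ) (a : PiLp (ENNReal.ofReal p) (fun _ : Fin 2 => ℝ)))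
        ≤ ⨆ a : σ, dist x (a : PiLp (ENNReal.ofReal p) (fun _ : Fin 2 => ℝ)))
    (x₀ x₁ : PiLp (ENNReal.ofReal p) (fun _ : Fin 2 => ℝ))
    (hx₀ : x₀ = (WithLp.equiv (ENNReal.ofReal p) (Fin 2 → ℝ)).symm ![(-1 : ℝ), 0])
    (hx₁ : x₁ = (WithLp.equiv (ENNReal.ofReal p) (Fin 2 → ℝ)).symm ![(1 : ℝ), 0]) :
    (∀ L > (0 : ℝ), ∃ z z' : PiLp (ENNReal.ofReal p) (fun _ : Fin 2 => ℝ),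
      0 < Metric.hausdorffDist ({x₀, x₁, z} : Set _) ({x₀, x₁, z'} : Set _) ∧
      L * Metric.hausdorffDist ({x₀, x₁, z} : Set _) ({x₀, x₁, z'} : Set _)
        < dist (cheb {x₀, x₁, z}) (cheb {x₀, x₁, z'})) ∧
    (∃ C > (0 : ℝ), ∃ ε > (0 : ℝ), ∀ z z' : PiLp (ENNReal.ofReal p) (fun _ : Fin 2 => ℝ),
      dist z x₁ ≤ ε → dist z' x₁ ≤ ε →
      dist (cheb {x₀, x₁, z}) (cheb {x₀, x₁, z'})
        ≤ C * Metric.hausdorffDist ({x₀, x₁, z} : Set _) ({x₀, x₁, z'} : Set _) ^ (1 / p)) ∧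
    (∀ α : ℝ, 1 / p < α →
      ¬ ∃ C > (0 : ℝ), ∃ ε > (0 : ℝ), ∀ z z' : PiLp (ENNReal.ofReal p) (fun _ : Fin 2 => ℝ),
        dist z x₁ ≤ ε → dist z' x₁ ≤ ε →
        dist (cheb {x₀, x₁, z}) (cheb {x₀, x₁, z'})
          ≤ C * Metric.hausdorffDist ({x₀, x₁, z} : Set _) ({x₀, x₁, z'} : Set _) ^ α) := by
  have hp0 : (0:ℝ) < p := by linarith
  have hp1 : (1:ℝ) ≤ p := by linarith
  have hp2 : (2:ℝ) ≤ p := by linarith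
  have hpne : p ≠ 0 := hp0.ne'
  have hx₀' : x₀ = mypt p (-1) 0 := hx₀
  have hx₁' : x₁ = mypt p 1 0 := hx₁
  refine ⟨?_, ?_, ?_⟩
  · -- Part 1 : not Lipschitz
    intro L hL
    set ε : ℝ := min (1/2) ((4*L)⁻¹ ^ (1/(p-1))) with hεdef
    have hε0 : 0 < ε := lt_min (by norm_num) (Real.rpow_pos_of_pos (by positivity) _)
    have hε2 : ε ≤ 1/2 := min_le_left _ _
    obtain ⟨z, z', hzx, hz'x, hpos, hle, hcc⟩ := mypair p hp cheb hcheb x₀ x₁ hx₀ hx₁ ε hε0 hε2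
    refine ⟨z, z', hpos, ?_⟩
    rw [hcc]
    have hεpow : ε ^ (p-1) ≤ (4*L)⁻¹ := by
      calc ε ^ (p-1) ≤ ((4*L)⁻¹ ^ (1/(p-1))) ^ (p-1) :=
            Real.rpow_le_rpow hε0.le (min_le_right _ _) (by linarith)
        _ = (4*L)⁻¹ := myri (by positivity) (by intro hc; rw [sub_eq_zero] at hc; linarith)
    have hεp : ε ^ p = ε ^ (p-1) * ε := by
      rw [← Real.rpow_add_one hε0.ne' (p-1)]; norm_num
    have h4 : L * (4*L)⁻¹ = 1/4 := by
      field_simp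
    have step : L * ε ^ (p-1) ≤ 1/4 := by
      have h5 := mul_le_mul_of_nonneg_left hεpow hL.le
      rwa [h4] at h5
    have step2 : L * ε ^ p ≤ ε / 4 := by
      calc L * ε ^ p = (L * ε ^ (p-1)) * ε := by rw [hεp]; ring
        _ ≤ (1/4) * ε := mul_le_mul_of_nonneg_right step hε0.le
        _ = ε / 4 := by ring
    have hLh := mul_le_mul_of_nonneg_left hle hL.le
    linarith
  · -- Part 2 : Hölder with exponent 1/p
    refine ⟨2 * (p * 6 ^ (p-1)) ^ (1/p), by positivity, 1, one_pos, ?_⟩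
    intro z z' hz hz'
    have hfinσ : ({x₀, x₁, z} : Set _).Finite :=
      Set.Finite.insert x₀ (Set.Finite.insert x₁ (Set.finite_singleton z))
    have hfinσ' : ({x₀, x₁, z'} : Set _).Finite :=
      Set.Finite.insert x₀ (Set.Finite.insert x₁ (Set.finite_singleton z'))
    have hneσ : ({x₀, x₁, z} : Set _).Nonempty := ⟨x₀, Set.mem_insert _ _⟩
    have hneσ' : ({x₀, x₁, z'} : Set _).Nonempty := ⟨x₀, Set.mem_insert _ _⟩
    set c := cheb {x₀, x₁, z} with hcdef
    set c' := cheb {x₀, x₁, z'} with hc'def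
    set D := Metric.hausdorffDist ({x₀, x₁, z} : Set _) ({x₀, x₁, z'} : Set _) with hDdef
    set r := (⨆ a : ({x₀, x₁, z} : Set _), dist c (a : _)) with hrdef
    have hD0 : 0 ≤ D := Metric.hausdorffDist_nonneg
    have hd01 : dist x₀ x₁ = 2 := by rw [hx₀', hx₁']; exact myd01 hp0
    -- r ≤ 2
    have hub : (⨆ a : ({x₀, x₁, z} : Set _), dist (mypt p 0 0) (a : _)) ≤ 2 := by
      refine myrad_le hneσ ?_
      intro a ha
      simp only [Set.mem_insert_iff, Set.mem_singleton_iff] at ha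
      rcases ha with rfl | rfl | rfl
      · rw [hx₀', mydw0 hp0]; norm_num
      · rw [hx₁', mydw1 hp0]; norm_num
      · calc dist (mypt p 0 0) a ≤ dist (mypt p 0 0) x₁ + dist x₁ a := dist_triangle _ _ _
          _ ≤ 1 + 1 := by
              have hx1a : dist x₁ a ≤ 1 := by rw [dist_comm]; exact hz
              have hw1 : dist (mypt p 0 0) x₁ = 1 := by rw [hx₁']; exact mydw1 hp0
              linarith
          _ = 2 := by norm_num
    have hr2 : r ≤ 2 := (hcheb _ hfinσ hneσ (mypt p 0 0)).trans hub
    have hr1 : 1 ≤ r := by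
      have t1 : dist c x₀ ≤ r := myle_rad hfinσ (Set.mem_insert _ _)
      have t2 : dist c x₁ ≤ r := myle_rad hfinσ (by simp)
      have t3 : dist x₀ x₁ ≤ dist x₀ c + dist c x₁ := dist_triangle _ _ _
      rw [dist_comm x₀ c] at t3
      linarith [hd01 ▸ t3]
    have hr0 : (0:ℝ) < r := by linarith
    -- D ≤ 2
    have hD2 : D ≤ 2 := by
      rw [hDdef]
      apply Metric.hausdorffDist_le_of_mem_dist (by norm_num : (0:ℝ) ≤ 2)
      · intro w hw
        simp only [Set.mem_insert_iff, Set.mem_singleton_iff] at hw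
        rcases hw with rfl | rfl | rfl
        · exact ⟨w, Set.mem_insert _ _, by rw [dist_self]; norm_num⟩
        · exact ⟨w, by simp, by rw [dist_self]; norm_num⟩
        · refine ⟨z', by simp, ?_⟩
          calc dist w z' ≤ dist w x₁ + dist x₁ z' := dist_triangle _ _ _
            _ ≤ 1 + 1 := add_le_add hz (by rw [dist_comm]; exact hz')
            _ = 2 := by norm_num
      · intro w hw
        simp only [Set.mem_insert_iff, Set.mem_singleton_iff] at hw
        rcases hw with rfl | rfl | rfl
        · exact ⟨w, Set.mem_insert _ _, by rw [dist_self]; norm_num⟩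
        · exact ⟨w, by simp, by rw [dist_self]; norm_num⟩
        · refine ⟨z, by simp, ?_⟩
          calc dist w z ≤ dist w x₁ + dist x₁ z := dist_triangle _ _ _
            _ ≤ 1 + 1 := add_le_add hz' (by rw [dist_comm]; exact hz)
            _ = 2 := by norm_num
    -- radius of σ at c' is at most r + 2 D
    have hA := mytransfer hfinσ hfinσ' hneσ hneσ' c'
    have hB := hcheb _ hfinσ' hneσ' c
    have hC := mytransfer hfinσ' hfinσ hneσ' hneσ c
    rw [Metric.hausdorffDist_comm] at hC
    have hRc' : (⨆ a : ({x₀, x₁, z} : Set _), dist c' (a : _)) ≤ r + 2*D := by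
      rw [hrdef]; rw [← hDdef] at hA hC
      linarith
    -- uniform convexity estimate
    set m := (2:ℝ)⁻¹ • (c + c') with hmdef
    have hBall : ∀ a ∈ ({x₀, x₁, z} : Set _),
        dist m a ^ p ≤ (r ^ p + (r + 2*D) ^ p)/2 - (dist c c' / 2) ^ p := by
      intro a ha
      have hkey := mykey hp2 c c' a
      have t1 : dist c a ^ p ≤ r ^ p :=
        Real.rpow_le_rpow dist_nonneg (myle_rad hfinσ ha) hp0.le
      have t2 : dist c' a ^ p ≤ (r + 2*D) ^ p :=
        Real.rpow_le_rpow dist_nonneg ((myle_rad hfinσ ha).trans hRc') hp0.le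
      rw [← hmdef] at hkey
      linarith
    have hBnn : 0 ≤ (r ^ p + (r + 2*D) ^ p)/2 - (dist c c' / 2) ^ p :=
      le_trans (Real.rpow_nonneg dist_nonneg p) (hBall x₀ (Set.mem_insert _ _))
    have hradm : (⨆ a : ({x₀, x₁, z} : Set _), dist m (a : _))
        ≤ ((r ^ p + (r + 2*D) ^ p)/2 - (dist c c' / 2) ^ p) ^ (1/p) := by
      refine myrad_le hneσ ?_
      intro a ha
      calc dist m a = (dist m a ^ p) ^ (1/p) := (myrr dist_nonneg hpne).symm
        _ ≤ ((r ^ p + (r + 2*D) ^ p)/2 - (dist c c' / 2) ^ p) ^ (1/p) :=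
            Real.rpow_le_rpow (Real.rpow_nonneg dist_nonneg p) (hBall a ha) (by positivity)
    have hrm : r ≤ ((r ^ p + (r + 2*D) ^ p)/2 - (dist c c' / 2) ^ p) ^ (1/p) :=
      le_trans (hcheb _ hfinσ hneσ m) hradm
    have hrp : r ^ p ≤ (r ^ p + (r + 2*D) ^ p)/2 - (dist c c' / 2) ^ p := by
      calc r ^ p ≤ (((r ^ p + (r + 2*D) ^ p)/2 - (dist c c' / 2) ^ p) ^ (1/p)) ^ p :=
            Real.rpow_le_rpow hr0.le hrm hp0.le
        _ = _ := myri hBnn hpne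
    have hDbound : (dist c c' / 2) ^ p ≤ ((r + 2*D) ^ p - r ^ p)/2 := by linarith
    have hbern := mybern hr0 (by linarith : (0:ℝ) ≤ 2*D) hp1
    have hexp : (r + 2*D) ^ (p-1) ≤ 6 ^ (p-1) :=
      Real.rpow_le_rpow (by linarith) (by linarith) (by linarith)
    have hDK : (dist c c' / 2) ^ p ≤ (p * 6 ^ (p-1)) * D := by
      have t1 : p * (2*D) * (r + 2*D) ^ (p-1) ≤ p * (2*D) * 6 ^ (p-1) :=
        mul_le_mul_of_nonneg_left hexp (by positivity)
      have t2 : (r + 2*D) ^ p - r ^ p ≤ p * (2*D) * 6 ^ (p-1) := le_trans hbern t1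
      calc (dist c c' / 2) ^ p ≤ ((r + 2*D) ^ p - r ^ p)/2 := hDbound
        _ ≤ (p * (2*D) * 6 ^ (p-1))/2 := by linarith
        _ = (p * 6 ^ (p-1)) * D := by ring
    have hfinal : dist c c' / 2 ≤ (p * 6 ^ (p-1)) ^ (1/p) * D ^ (1/p) := by
      calc dist c c' / 2 = ((dist c c' / 2) ^ p) ^ (1/p) := (myrr (by positivity) hpne).symm
        _ ≤ ((p * 6 ^ (p-1)) * D) ^ (1/p) :=
            Real.rpow_le_rpow (Real.rpow_nonneg (by positivity) p) hDK (by positivity)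
        _ = (p * 6 ^ (p-1)) ^ (1/p) * D ^ (1/p) := Real.mul_rpow (by positivity) hD0
    calc dist c c' = 2 * (dist c c' / 2) := by ring
      _ ≤ 2 * ((p * 6 ^ (p-1)) ^ (1/p) * D ^ (1/p)) := by linarith
      _ = 2 * (p * 6 ^ (p-1)) ^ (1/p) * D ^ (1/p) := by ring
  · -- Part 3 : no better Hölder exponent
    intro α hα
    rintro ⟨C, hC, ε₀, hε₀, H⟩
    have hα0 : 0 < α := lt_trans (by positivity) hα
    have hpα : 1 < α * p := (div_lt_iff₀ hp0).mp hα
    set β := p * α - 1 with hβdef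
    have hβ0 : 0 < β := by rw [hβdef]; nlinarith
    set ε : ℝ := min (min (1/2) (ε₀/2)) ((4*C)⁻¹ ^ (1/β)) with hεdef
    have hε0 : 0 < ε :=
      lt_min (lt_min (by norm_num) (by positivity)) (Real.rpow_pos_of_pos (by positivity) _)
    have hε2 : ε ≤ 1/2 := (min_le_left _ _).trans (min_le_left _ _)
    have hεε₀ : ε ≤ ε₀/2 := (min_le_left _ _).trans (min_le_right _ _)
    obtain ⟨z, z', hzx, hz'x, hpos, hle, hcc⟩ := mypair p hp cheb hcheb x₀ x₁ hx₀ hx₁ ε hε0 hε2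
    have h1 : dist z x₁ ≤ ε₀ := hzx.trans (by linarith)
    have h2 : dist z' x₁ ≤ ε₀ := hz'x.trans (by linarith)
    have hH := H z z' h1 h2
    rw [hcc] at hH
    set D := Metric.hausdorffDist ({x₀, x₁, z} : Set _) ({x₀, x₁, z'} : Set _) with hDdef
    have hhα : D ^ α ≤ (ε ^ p) ^ α :=
      Real.rpow_le_rpow Metric.hausdorffDist_nonneg hle hα0.le
    have hεpα : (ε ^ p) ^ α = ε ^ (p * α) := (Real.rpow_mul hε0.le p α).symm
    have hsplit : ε ^ (p * α) = ε ^ β * ε := by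
      rw [← Real.rpow_add_one hε0.ne' β]
      congr 1
      rw [hβdef]; ring
    have hεβ : ε ^ β ≤ (4*C)⁻¹ := by
      calc ε ^ β ≤ ((4*C)⁻¹ ^ (1/β)) ^ β :=
            Real.rpow_le_rpow hε0.le (min_le_right _ _) hβ0.le
        _ = (4*C)⁻¹ := myri (by positivity) hβ0.ne'
    have h4 : C * (4*C)⁻¹ = 1/4 := by field_simp
    have hfin : C * D ^ α ≤ ε/4 := by
      calc C * D ^ α ≤ C * (ε ^ β * ε) := by
            apply mul_le_mul_of_nonneg_left _ hC.le
            rw [← hsplit, ← hεpα]; exact hhα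
        _ = (C * ε ^ β) * ε := by ring
        _ ≤ (1/4) * ε := by
            apply mul_le_mul_of_nonneg_right _ hε0.le
            have h5 := mul_le_mul_of_nonneg_left hεβ hC.le
            rwa [h4] at h5
        _ = ε/4 := by ring
    linarith
end
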